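/- arXiv:2605.19942 — 10 statements merged into one kernel-verified Lean document; each statement's English description precedes it below -/
import Mathlib

section
/- Let s ≥ 1 and let A, D¹, D² be s×s real lower-triangular matrices with c = A𝟙 and D¹𝟙 = D²𝟙 = 𝟙 (𝟙 the all-ones vector), let b ∈ ℝ^s, and let J be the s×s shift matrix (J_{ij}=1 if i=j+1, else 0). Assume the order conditions: bᵀ𝟙 = 1; bᵀD¹Jc = bᵀD²c = 1/2; bᵀD¹JAD¹Jc = bᵀD¹JAD²c = bᵀD²AD¹Jc = bᵀD²AD²c = 1/6; bᵀ((D¹Jc)∘(D¹Jc)) = bᵀ((D¹Jc)∘(D²c)) = bᵀ((D²c)∘(D²c)) = 1/3, where ∘ denotes the entrywise product. Let f₁, f₂ : ℝ → ℝ be three times continuously differentiable, let T > 0, and let u : [0,T] → ℝ be differentiable with u'(t) = f₁(u(t))·f₂(u(t)) for all t ∈ [0,T]. For t ∈ [0,T] and τ > 0 define v₀ = u(t), v⁽¹⁾ = f₁(v₀)f₂(v₀)·c ∈ ℝ^s, v⁽²⁾ = f₁'(v₀)f₂(v₀)·A D¹J v⁽¹⁾ + f₁(v₀)f₂'(v₀)·A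 D² v⁽¹⁾ ∈ ℝ^s, v = v₀𝟙 + τ v⁽¹⁾ + τ² v⁽²⁾, and v̂ = v₀𝟙 + τ J v⁽¹⁾ + τ² J v⁽²⁾. Then there exists a constant C > 0 such that for all τ ∈ (0,1] and all t ∈ [0,T] with t + τ ≤ T, one has |u(t+τ) − v₀ − τ Σ_{i=1}^s b_i f₁((D¹v̂)_i) f₂((D²v)_i)| ≤ C τ⁴, and moreover max_{1≤i≤s} |v_i − v₀ − τ Σ_{j=1}^s a_{ij} f₁((D¹v̂)_j) f₂((D²v)_j)| ≤ C τ³. -/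
/-!
Along a solution of `y' = V ∘ y` the derivative of `Φ ∘ y` is `lieDeriv V Φ ∘ y`, so iterating the
mean value theorem bounds the remainder of `∑ₖ (lieDeriv V)^[k] Φ (y 0) hᵏ / k!` by the size of the
next Lie derivative along the trajectory. With `V = 1` this is Taylor's theorem for `f₁` and `f₂`;
with `V = F = f₁ f₂` and `Φ = id` it gives `u(t + τ) = u + τ F + τ²/2 F'F + τ³/6 (F'F)'F + O(τ⁴)`.
Expanding every stage slope `f₁((D¹v̂)ⱼ) f₂((D²v)ⱼ)` to second order in `τ`, the order conditions
turn `τ ∑ⱼ bⱼ (…)` into exactly this polynomial, and `v⁽²⁾ = A e₁` (with `e₁` the first-order slope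
coefficient) makes the stage equations hold up to `O(τ³)`.

Uniformity in `t` is encoded by stating every estimate as `=O[𝓟 S]`, where `S` is the set of
admissible pairs `(t, τ)`, or along any filter on which `u t` and `τ` stay bounded.
-/

open Asymptotics Filter Finset Matrix Set
open scoped Nat

noncomputable section

def lieDeriv (V Φ : ℝ → ℝ) (x : ℝ) : ℝ := deriv Φ x * V x

theorem ContDiff.lieDeriv {V Φ : ℝ → ℝ} {n : ℕ} (hΦ : ContDiff ℝ (n + 1 : ℕ) Φ)
    (hV : ContDiff ℝ n V) : ContDiff ℝ n (lieDeriv V Φ) :=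
  hΦ.deriv'.mul hV

theorem ContDiff.iterate_lieDeriv {V Φ : ℝ → ℝ} {m : ℕ} (k : ℕ) (hV : ContDiff ℝ (m + k : ℕ) V)
    (hΦ : ContDiff ℝ (m + k + 1 : ℕ) Φ) : ContDiff ℝ m ((_root_.lieDeriv V)^[k + 1] Φ) := by
  induction k generalizing Φ with
  | zero => exact hΦ.lieDeriv hV
  | succ k ih =>
    rw [Function.iterate_succ_apply]
    exact ih (hV.of_le (by norm_cast; omega)) (hΦ.lieDeriv (hV.of_le (by norm_cast)))

theorem lieDeriv_id (V : ℝ → ℝ) : lieDeriv V id = V := by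
  ext x; simp [lieDeriv]

theorem lieDeriv_one : lieDeriv (fun _ => 1) = deriv := by
  ext Φ x; simp [lieDeriv]

theorem hasDerivAt_sum_mul_pow_div_factorial (a : ℕ → ℝ) (n : ℕ) (x : ℝ) :
    HasDerivAt (fun x => ∑ k ∈ range (n + 1), a k * x ^ k / k !)
      (∑ k ∈ range n, a (k + 1) * x ^ k / k !) x := by
  simp_rw [sum_range_succ' _ n, pow_zero]
  refine (HasDerivAt.fun_sum (A := fun k x => a (k + 1) * x ^ (k + 1) / (k + 1)!)
    fun k _ => ?_).add_const _
  refine (((hasDerivAt_pow (k + 1) x).const_mul (a (k + 1))).div_const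
    ((k + 1)! : ℝ)).congr_deriv ?_
  rw [Nat.factorial_succ]; push_cast; field_simp

theorem abs_sub_taylor_lieDeriv_le_of_deriv {V y Φ : ℝ → ℝ} {h C : ℝ} (n : ℕ)
    (hΦ : Differentiable ℝ Φ) (hy : ∀ x ∈ uIcc 0 h, HasDerivWithinAt y (V (y x)) (uIcc 0 h) x)
    (hC : ∀ x ∈ uIcc 0 h,
      |lieDeriv V Φ (y x) - ∑ k ∈ range n, (lieDeriv V)^[k + 1] Φ (y 0) * x ^ k / k !| ≤ C) :
    |Φ (y h) - ∑ k ∈ range (n + 1), (lieDeriv V)^[k] Φ (y 0) * h ^ k / k !| ≤ C * |h| := by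
  have hderiv : ∀ x ∈ uIcc 0 h, HasDerivWithinAt
      (fun x => Φ (y x) - ∑ k ∈ range (n + 1), (lieDeriv V)^[k] Φ (y 0) * x ^ k / k !)
      (lieDeriv V Φ (y x) - ∑ k ∈ range n, (lieDeriv V)^[k + 1] Φ (y 0) * x ^ k / k !)
      (uIcc 0 h) x := fun x hx =>
    ((hΦ (y x)).hasDerivAt.comp_hasDerivWithinAt x (hy x hx)).sub
      (hasDerivAt_sum_mul_pow_div_factorial _ n x).hasDerivWithinAt
  simpa [sum_range_succ'] using (convex_uIcc 0 h).norm_image_sub_le_of_norm_hasDerivWithin_le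
    hderiv hC left_mem_uIcc right_mem_uIcc

theorem abs_sub_taylor_lieDeriv_le {V y Φ : ℝ → ℝ} {h M : ℝ} (n : ℕ) (hV : ContDiff ℝ n V)
    (hΦ : ContDiff ℝ (n + 1 : ℕ) Φ)
    (hy : ∀ x ∈ uIcc 0 h, HasDerivWithinAt y (V (y x)) (uIcc 0 h) x)
    (hM : ∀ x ∈ uIcc 0 h, |(lieDeriv V)^[n + 1] Φ (y x)| ≤ M) :
    |Φ (y h) - ∑ k ∈ range (n + 1), (lieDeriv V)^[k] Φ (y 0) * h ^ k / k !| ≤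
      M * |h| ^ (n + 1) := by
  induction n generalizing Φ h with
  | zero =>
    simpa using abs_sub_taylor_lieDeriv_le_of_deriv 0 (hΦ.differentiable (by simp)) hy
      (by simpa using hM)
  | succ n ih =>
    have hM0 : 0 ≤ M := (abs_nonneg _).trans (hM 0 left_mem_uIcc)
    rw [pow_succ, ← mul_assoc]
    refine abs_sub_taylor_lieDeriv_le_of_deriv (n + 1) (hΦ.differentiable (by simp)) hy
      fun x hx => ?_
    have hsub : uIcc 0 x ⊆ uIcc 0 h := uIcc_subset_uIcc left_mem_uIcc hx
    have hxh : |x| ≤ |h| := by simpa using abs_sub_left_of_mem_uIcc hx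
    refine (ih (hV.of_le (by norm_cast; omega)) (hΦ.lieDeriv hV)
      (fun z hz => (hy z (hsub hz)).mono hsub) fun z hz => hM z (hsub hz)).trans ?_
    gcongr

section Expansion

variable {ι : Type*} {l : Filter ι}

theorem Asymptotics.IsBigO.bounded_mul {a f g : ι → ℝ} (ha : a =O[l] fun _ => (1 : ℝ))
    (hf : f =O[l] g) : (fun i => a i * f i) =O[l] g := by
  simpa using ha.mul hf

theorem Asymptotics.IsBigO.pow_of_le {τ : ι → ℝ} (hτ : τ =O[l] fun _ => (1 : ℝ)) {m n : ℕ}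
    (hmn : m ≤ n) : (fun i => τ i ^ n) =O[l] fun i => τ i ^ m := by
  have := (hτ.pow (n - m)).mul (isBigO_refl (fun i => τ i ^ m) l)
  simpa [← pow_add, Nat.sub_add_cancel hmn] using this

theorem Asymptotics.IsBigO.pow_isBigO_one {τ : ι → ℝ} (hτ : τ =O[l] fun _ => (1 : ℝ)) (n : ℕ) :
    (fun i => τ i ^ n) =O[l] fun _ => (1 : ℝ) := by
  simpa using hτ.pow n

theorem Continuous.isBigO_one_comp {g : ℝ → ℝ} (hg : Continuous g) {w : ι → ℝ}
    (hw : w =O[l] fun _ => (1 : ℝ)) : (fun i => g (w i)) =O[l] fun _ => (1 : ℝ) := by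
  obtain ⟨K, hK⟩ := (isBigO_one_iff ℝ).mp hw
  obtain ⟨M, hM⟩ := (isCompact_Icc (a := -K) (b := K)).exists_bound_of_continuousOn
    hg.continuousOn
  refine IsBigO.of_bound M ?_
  filter_upwards [hK] with i hi
  simpa using hM (w i) (abs_le.mp hi)

theorem ContDiff.isBigO_sub_taylor {f : ℝ → ℝ} {n : ℕ} (hf : ContDiff ℝ (n + 1 : ℕ) f)
    {w h : ι → ℝ} (hw : w =O[l] fun _ => (1 : ℝ)) (hh : h =O[l] fun _ => (1 : ℝ)) :
    (fun i => f (w i + h i) - ∑ k ∈ range (n + 1), deriv^[k] f (w i) * h i ^ k / k !)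
      =O[l] fun i => h i ^ (n + 1) := by
  obtain ⟨K, hK⟩ := (isBigO_one_iff ℝ).mp hw
  obtain ⟨K', hK'⟩ := (isBigO_one_iff ℝ).mp hh
  have hcont : Continuous (deriv^[n + 1] f) :=
    (ContDiff.iterate_deriv' 0 (n + 1) (by simpa using hf)).continuous
  obtain ⟨M, hM⟩ := (isCompact_Icc (a := -(K + K')) (b := K + K')).exists_bound_of_continuousOn
    hcont.continuousOn
  refine IsBigO.of_bound M ?_
  filter_upwards [hK, hK'] with i hwi hhi
  have htaylor := abs_sub_taylor_lieDeriv_le (V := fun _ => 1) (y := fun x => w i + x)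
    (Φ := f) (h := h i) (M := M) n contDiff_const hf
    (fun x _ => ((hasDerivAt_id' x).const_add (w i)).hasDerivWithinAt) fun x hx => by
      rw [lieDeriv_one, ← Real.norm_eq_abs]
      refine hM _ (abs_le.mp ((abs_add_le _ _).trans (add_le_add ?_ ?_)))
      · simpa using hwi
      · simpa using (abs_sub_left_of_mem_uIcc hx).trans (by simpa using hhi)
  simpa [lieDeriv_one, abs_pow] using htaylor

theorem isBigO_one_expansion {τ a₀ a₁ a₂ : ι → ℝ} (hτ : τ =O[l] fun _ => (1 : ℝ))
    (ha₀ : a₀ =O[l] fun _ => (1 : ℝ)) (ha₁ : a₁ =O[l] fun _ => (1 : ℝ))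
    (ha₂ : a₂ =O[l] fun _ => (1 : ℝ)) :
    (fun i => a₀ i + τ i * a₁ i + τ i ^ 2 * a₂ i) =O[l] fun _ => (1 : ℝ) :=
  (ha₀.add (hτ.bounded_mul ha₁)).add ((hτ.pow_isBigO_one 2).bounded_mul ha₂)

theorem isBigO_mul_sub_expansion {τ x y a₀ a₁ a₂ b₀ b₁ b₂ : ι → ℝ}
    (hτ : τ =O[l] fun _ => (1 : ℝ))
    (ha₀ : a₀ =O[l] fun _ => (1 : ℝ)) (ha₁ : a₁ =O[l] fun _ => (1 : ℝ))
    (ha₂ : a₂ =O[l] fun _ => (1 : ℝ)) (hb₀ : b₀ =O[l] fun _ => (1 : ℝ))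
    (hb₁ : b₁ =O[l] fun _ => (1 : ℝ)) (hb₂ : b₂ =O[l] fun _ => (1 : ℝ))
    (hx : (fun i => x i - (a₀ i + τ i * a₁ i + τ i ^ 2 * a₂ i)) =O[l] fun i => τ i ^ 3)
    (hy : (fun i => y i - (b₀ i + τ i * b₁ i + τ i ^ 2 * b₂ i)) =O[l] fun i => τ i ^ 3) :
    (fun i => x i * y i - (a₀ i * b₀ i + τ i * (a₀ i * b₁ i + a₁ i * b₀ i)
      + τ i ^ 2 * (a₀ i * b₂ i + a₁ i * b₁ i + a₂ i * b₀ i))) =O[l] fun i => τ i ^ 3 := by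
  -- With `X`, `Y` the truncations of `x`, `y` and `E` the claimed expansion,
  -- `x y - E = τ³ (a₁ b₂ + a₂ b₁ + τ a₂ b₂) + X (y - Y) + (x - X) y`.
  have hy_bdd : y =O[l] fun _ => (1 : ℝ) :=
    ((isBigO_one_expansion hτ hb₀ hb₁ hb₂).add (hy.trans (hτ.pow_isBigO_one 3))).congr_left
      fun i => by ring
  have hcross : (fun i => τ i ^ 3 * (a₁ i * b₂ i + a₂ i * b₁ i + τ i * (a₂ i * b₂ i)))
      =O[l] fun i => τ i ^ 3 :=
    (((ha₁.bounded_mul hb₂).add (ha₂.bounded_mul hb₁)).add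
      (hτ.bounded_mul (ha₂.bounded_mul hb₂))).bounded_mul (isBigO_refl _ _) |>.congr_left
      fun i => by ring
  refine ((hcross.add ((isBigO_one_expansion hτ ha₀ ha₁ ha₂).bounded_mul hy)).add
    (hy_bdd.bounded_mul hx)).congr_left fun i => by ring

theorem ContDiff.isBigO_comp_sub_expansion {f : ℝ → ℝ} (hf : ContDiff ℝ 3 f) {τ w α β : ι → ℝ}
    (hτ : τ =O[l] fun _ => (1 : ℝ)) (hw : w =O[l] fun _ => (1 : ℝ))
    (hα : α =O[l] fun _ => (1 : ℝ)) (hβ : β =O[l] fun _ => (1 : ℝ)) :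
    (fun i => f (w i + τ i * α i + τ i ^ 2 * β i) - (f (w i) + τ i * (deriv f (w i) * α i)
      + τ i ^ 2 * (deriv f (w i) * β i + deriv (deriv f) (w i) / 2 * α i ^ 2)))
      =O[l] fun i => τ i ^ 3 := by
  have he : (fun i => α i + τ i * β i) =O[l] fun _ => (1 : ℝ) := hα.add (hτ.bounded_mul hβ)
  have htaylor := ContDiff.isBigO_sub_taylor (n := 2) hf hw (hτ.bounded_mul he)
  have hcube : (fun i => (τ i * (α i + τ i * β i)) ^ 3) =O[l] fun i => τ i ^ 3 :=
    ((he.pow_isBigO_one 3).bounded_mul (isBigO_refl _ _)).congr_left fun i => by ring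
  have hcoef : (fun i => deriv (deriv f) (w i) / 2 * (2 * α i * β i + τ i * β i ^ 2))
      =O[l] fun _ => (1 : ℝ) :=
    (((hf.deriv' : ContDiff ℝ 2 (deriv f)).continuous_deriv (by norm_num)).div_const 2
      |>.isBigO_one_comp hw).bounded_mul
      (((hα.bounded_mul hβ).const_mul_left 2).add (hτ.bounded_mul (hβ.pow_isBigO_one 2))
        |>.congr_left fun i => by ring)
  refine ((htaylor.trans hcube).add (hcoef.bounded_mul (isBigO_refl _ _))).congr_left
    fun i => ?_
  rw [show w i + τ i * α i + τ i ^ 2 * β i = w i + τ i * (α i + τ i * β i) by ring]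
  simp [sum_range_succ]
  ring

theorem ContDiff.isBigO_comp_mul_comp_sub_expansion {f g : ℝ → ℝ} (hf : ContDiff ℝ 3 f)
    (hg : ContDiff ℝ 3 g) {τ w α β γ δ : ι → ℝ} (hτ : τ =O[l] fun _ => (1 : ℝ))
    (hw : w =O[l] fun _ => (1 : ℝ)) (hα : α =O[l] fun _ => (1 : ℝ))
    (hβ : β =O[l] fun _ => (1 : ℝ)) (hγ : γ =O[l] fun _ => (1 : ℝ))
    (hδ : δ =O[l] fun _ => (1 : ℝ)) :
    (fun i => f (w i + τ i * α i + τ i ^ 2 * β i) * g (w i + τ i * γ i + τ i ^ 2 * δ i)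
      - (f (w i) * g (w i) + τ i * (deriv f (w i) * g (w i) * α i + f (w i) * deriv g (w i) * γ i)
        + τ i ^ 2 * (deriv f (w i) * g (w i) * β i + f (w i) * deriv g (w i) * δ i
          + deriv (deriv f) (w i) / 2 * g (w i) * α i ^ 2
          + f (w i) * (deriv (deriv g) (w i) / 2) * γ i ^ 2
          + deriv f (w i) * deriv g (w i) * (α i * γ i))))
      =O[l] fun i => τ i ^ 3 := by
  have hcoeff {f : ℝ → ℝ} (hf : ContDiff ℝ 3 f) {α β : ι → ℝ} (hα : α =O[l] fun _ => (1 : ℝ))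
      (hβ : β =O[l] fun _ => (1 : ℝ)) :
      (fun i => deriv f (w i) * α i) =O[l] (fun _ => (1 : ℝ)) ∧
      (fun i => deriv f (w i) * β i + deriv (deriv f) (w i) / 2 * α i ^ 2)
        =O[l] fun _ => (1 : ℝ) := by
    have hf' := (hf.continuous_deriv (by norm_num)).isBigO_one_comp hw
    have hf'' := ((hf.deriv' : ContDiff ℝ 2 (deriv f)).continuous_deriv (by norm_num)).div_const 2
      |>.isBigO_one_comp hw
    exact ⟨hf'.bounded_mul hα, (hf'.bounded_mul hβ).add (hf''.bounded_mul (hα.pow_isBigO_one 2))⟩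
  obtain ⟨ha₁, ha₂⟩ := hcoeff hf hα hβ
  obtain ⟨hb₁, hb₂⟩ := hcoeff hg hγ hδ
  exact (isBigO_mul_sub_expansion hτ (hf.continuous.isBigO_one_comp hw) ha₁ ha₂
    (hg.continuous.isBigO_one_comp hw) hb₁ hb₂ (hf.isBigO_comp_sub_expansion hτ hw hα hβ)
    (hg.isBigO_comp_sub_expansion hτ hw hγ hδ)).congr_left fun i => by ring

end Expansion

theorem isBigO_sub_taylor_of_hasDerivWithinAt {V u : ℝ → ℝ} {T : ℝ} (n : ℕ)
    (hV : ContDiff ℝ n V) (hu : ∀ t ∈ Icc 0 T, HasDerivWithinAt u (V (u t)) (Icc 0 T) t) :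
    (fun p : ℝ × ℝ => u (p.1 + p.2) -
        ∑ k ∈ range (n + 1), (lieDeriv V)^[k] id (u p.1) * p.2 ^ k / k !)
      =O[𝓟 {p | p.1 ∈ Icc 0 T ∧ 0 ≤ p.2 ∧ p.1 + p.2 ≤ T}] fun p => p.2 ^ (n + 1) := by
  obtain ⟨N, hN⟩ := isCompact_Icc.exists_bound_of_continuousOn
    fun t ht => (hu t ht).continuousWithinAt
  have hcont : Continuous ((lieDeriv V)^[n + 1] id) :=
    (ContDiff.iterate_lieDeriv (m := 0) n (by simpa using hV) contDiff_id).continuous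
  obtain ⟨M, hM⟩ := (isCompact_Icc (a := -N) (b := N)).exists_bound_of_continuousOn
    hcont.continuousOn
  refine IsBigO.of_bound M (eventually_principal.mpr ?_)
  rintro ⟨t, τ⟩ ⟨ht, hτ, htτ⟩
  have hmem : ∀ x ∈ uIcc 0 τ, t + x ∈ Icc 0 T := fun x hx => by
    rw [uIcc_of_le hτ] at hx
    constructor <;> linarith [ht.1, hx.1, hx.2]
  have htaylor := abs_sub_taylor_lieDeriv_le (y := fun x => u (t + x)) (Φ := id) (h := τ)
    (M := M) n hV contDiff_id
    (fun x hx => by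
      simpa [Function.comp_def] using (hu _ (hmem x hx)).comp x
        ((hasDerivAt_id' x).const_add t).hasDerivWithinAt fun z hz => hmem z hz)
    fun x hx => hM _ (abs_le.mp (by simpa using hN _ (hmem x hx)))
  simpa [abs_pow] using htaylor

theorem sum_taylor_lieDeriv_mul {f₁ f₂ : ℝ → ℝ} (hf₁ : ContDiff ℝ 2 f₁) (hf₂ : ContDiff ℝ 2 f₂)
    (v τ : ℝ) :
    ∑ k ∈ range 4, (lieDeriv fun x => f₁ x * f₂ x)^[k] id v * τ ^ k / k !
      = v + τ * (f₁ v * f₂ v)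
        + τ ^ 2 / 2 * ((deriv f₁ v * f₂ v + f₁ v * deriv f₂ v) * (f₁ v * f₂ v))
        + τ ^ 3 / 6 * (((deriv (deriv f₁) v * f₂ v + 2 * (deriv f₁ v * deriv f₂ v)
          + f₁ v * deriv (deriv f₂) v) * (f₁ v * f₂ v)
          + (deriv f₁ v * f₂ v + f₁ v * deriv f₂ v) ^ 2) * (f₁ v * f₂ v)) := by
  have hd₁ := hf₁.differentiable (by norm_num)
  have hd₂ := hf₂.differentiable (by norm_num)
  have hd₁' := hf₁.differentiable_deriv_two
  have hd₂' := hf₂.differentiable_deriv_two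
  have hF (x : ℝ) : HasDerivAt (fun x => f₁ x * f₂ x)
      (deriv f₁ x * f₂ x + f₁ x * deriv f₂ x) x :=
    (hd₁ x).hasDerivAt.mul (hd₂ x).hasDerivAt
  have hF' (x : ℝ) : HasDerivAt (fun x => (deriv f₁ x * f₂ x + f₁ x * deriv f₂ x) * (f₁ x * f₂ x))
      ((deriv (deriv f₁) x * f₂ x + 2 * (deriv f₁ x * deriv f₂ x) + f₁ x * deriv (deriv f₂) x)
        * (f₁ x * f₂ x) + (deriv f₁ x * f₂ x + f₁ x * deriv f₂ x) ^ 2) x :=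
    ((((hd₁' x).hasDerivAt.mul (hd₂ x).hasDerivAt).add
      ((hd₁ x).hasDerivAt.mul (hd₂' x).hasDerivAt)).mul (hF x)).congr_deriv
      (by simp only [Pi.add_apply, Pi.mul_apply]; ring)
  have hL₁ : lieDeriv (fun x => f₁ x * f₂ x) (fun x => f₁ x * f₂ x)
      = fun x => (deriv f₁ x * f₂ x + f₁ x * deriv f₂ x) * (f₁ x * f₂ x) := by
    ext x; simp only [lieDeriv, (hF x).deriv]
  have hL₂ : lieDeriv (fun x => f₁ x * f₂ x)
      (fun x => (deriv f₁ x * f₂ x + f₁ x * deriv f₂ x) * (f₁ x * f₂ x))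
      = fun x => ((deriv (deriv f₁) x * f₂ x + 2 * (deriv f₁ x * deriv f₂ x)
          + f₁ x * deriv (deriv f₂) x) * (f₁ x * f₂ x)
          + (deriv f₁ x * f₂ x + f₁ x * deriv f₂ x) ^ 2) * (f₁ x * f₂ x) := by
    ext x; simp only [lieDeriv, (hF' x).deriv]
  simp [sum_range_succ, Function.iterate_succ_apply, lieDeriv_id, hL₁, hL₂, Nat.factorial]
  ring

theorem mulVec_const_add_of_mulVec_one {m n : Type*} [Fintype n] {D : Matrix m n ℝ}
    (hD : (D *ᵥ fun _ => 1) = fun _ => 1) (v₀ τ : ℝ) (x y : n → ℝ) :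
    D *ᵥ (fun i => v₀ + τ * x i + τ ^ 2 * y i)
      = fun i => v₀ + τ * (D *ᵥ x) i + τ ^ 2 * (D *ᵥ y) i := by
  have hsplit : (fun i => v₀ + τ * x i + τ ^ 2 * y i)
      = v₀ • (fun _ => (1 : ℝ)) + τ • x + τ ^ 2 • y := by
    ext; simp
  rw [hsplit, mulVec_add, mulVec_add, mulVec_smul, mulVec_smul, mulVec_smul, hD]
  ext; simp

section Scheme

variable {s : ℕ} (A D₁ D₂ J : Matrix (Fin s) (Fin s) ℝ) (f₁ f₂ : ℝ → ℝ)

/- `stageTerm₁`, `stageTerm₂`, `truncStage`, `truncStageHat` are the paper's `v⁽¹⁾`, `v⁽²⁾`, `v`,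
`v̂` (with `c = A𝟙`); `slopeCoeff₁`, `slopeCoeff₂` are the coefficients of `τ` and `τ²` in the
expansion of `stageSlope`. -/
def stageTerm₁ (v₀ : ℝ) : Fin s → ℝ := (f₁ v₀ * f₂ v₀) • (A *ᵥ fun _ => 1)

def stageTerm₂ (v₀ : ℝ) : Fin s → ℝ :=
  (deriv f₁ v₀ * f₂ v₀) • (A *ᵥ (D₁ *ᵥ (J *ᵥ stageTerm₁ A f₁ f₂ v₀)))
    + (f₁ v₀ * deriv f₂ v₀) • (A *ᵥ (D₂ *ᵥ stageTerm₁ A f₁ f₂ v₀))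

def truncStage (v₀ τ : ℝ) : Fin s → ℝ :=
  fun i => v₀ + τ * stageTerm₁ A f₁ f₂ v₀ i + τ ^ 2 * stageTerm₂ A D₁ D₂ J f₁ f₂ v₀ i

def truncStageHat (v₀ τ : ℝ) : Fin s → ℝ :=
  fun i => v₀ + τ * (J *ᵥ stageTerm₁ A f₁ f₂ v₀) i
    + τ ^ 2 * (J *ᵥ stageTerm₂ A D₁ D₂ J f₁ f₂ v₀) i

def stageSlope (v₀ τ : ℝ) : Fin s → ℝ :=
  fun j => f₁ ((D₁ *ᵥ truncStageHat A D₁ D₂ J f₁ f₂ v₀ τ) j)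
    * f₂ ((D₂ *ᵥ truncStage A D₁ D₂ J f₁ f₂ v₀ τ) j)

def slopeCoeff₁ (v₀ : ℝ) : Fin s → ℝ :=
  (deriv f₁ v₀ * f₂ v₀) • (D₁ *ᵥ (J *ᵥ stageTerm₁ A f₁ f₂ v₀))
    + (f₁ v₀ * deriv f₂ v₀) • (D₂ *ᵥ stageTerm₁ A f₁ f₂ v₀)

def slopeCoeff₂ (v₀ : ℝ) : Fin s → ℝ :=
  let α := D₁ *ᵥ (J *ᵥ stageTerm₁ A f₁ f₂ v₀)
  let γ := D₂ *ᵥ stageTerm₁ A f₁ f₂ v₀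
  (deriv f₁ v₀ * f₂ v₀) • (D₁ *ᵥ (J *ᵥ stageTerm₂ A D₁ D₂ J f₁ f₂ v₀))
    + (f₁ v₀ * deriv f₂ v₀) • (D₂ *ᵥ stageTerm₂ A D₁ D₂ J f₁ f₂ v₀)
    + (deriv (deriv f₁) v₀ / 2 * f₂ v₀) • (α * α) + (f₁ v₀ * (deriv (deriv f₂) v₀ / 2)) • (γ * γ)
    + (deriv f₁ v₀ * deriv f₂ v₀) • (α * γ)

theorem stageTerm₂_eq_mulVec_slopeCoeff₁ (v₀ : ℝ) :
    stageTerm₂ A D₁ D₂ J f₁ f₂ v₀ = A *ᵥ slopeCoeff₁ A D₁ D₂ J f₁ f₂ v₀ := by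
  simp [stageTerm₂, slopeCoeff₁, mulVec_add, mulVec_smul]

theorem truncStage_eq (v₀ τ : ℝ) :
    truncStage A D₁ D₂ J f₁ f₂ v₀ τ = fun i => v₀ + τ * ∑ j, A i j *
      (f₁ v₀ * f₂ v₀ + τ * slopeCoeff₁ A D₁ D₂ J f₁ f₂ v₀ j) := by
  ext i
  simp only [truncStage, stageTerm₂_eq_mulVec_slopeCoeff₁, stageTerm₁, mulVec, dotProduct,
    Pi.smul_apply, smul_eq_mul, mul_add, sum_add_distrib, mul_sum]
  ring_nf

theorem continuous_stageTerm₁ (hf₁ : Continuous f₁) (hf₂ : Continuous f₂) :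
    Continuous (stageTerm₁ A f₁ f₂) := by
  unfold stageTerm₁; fun_prop

theorem continuous_stageTerm₂ (hf₁ : ContDiff ℝ 1 f₁) (hf₂ : ContDiff ℝ 1 f₂) :
    Continuous (stageTerm₂ A D₁ D₂ J f₁ f₂) := by
  have := continuous_stageTerm₁ A f₁ f₂ hf₁.continuous hf₂.continuous
  have := hf₁.continuous; have := hf₂.continuous
  have := hf₁.continuous_deriv le_rfl; have := hf₂.continuous_deriv le_rfl
  unfold stageTerm₂; fun_prop

theorem continuous_slopeCoeff₂ (hf₁ : ContDiff ℝ 2 f₁) (hf₂ : ContDiff ℝ 2 f₂) :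
    Continuous (slopeCoeff₂ A D₁ D₂ J f₁ f₂) := by
  have := continuous_stageTerm₁ A f₁ f₂ hf₁.continuous hf₂.continuous
  have := continuous_stageTerm₂ A D₁ D₂ J f₁ f₂ (hf₁.of_le (by norm_num)) (hf₂.of_le (by norm_num))
  have := hf₁.continuous; have := hf₂.continuous
  have := hf₁.continuous_deriv (by norm_num); have := hf₂.continuous_deriv (by norm_num)
  have := (hf₁.deriv' : ContDiff ℝ 1 (deriv f₁)).continuous_deriv le_rfl
  have := (hf₂.deriv' : ContDiff ℝ 1 (deriv f₂)).continuous_deriv le_rfl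
  unfold slopeCoeff₂; fun_prop

structure ThirdOrderConditions (b : Fin s → ℝ) : Prop where
  sum_eq : ∑ i, b i = 1
  d₁ : b ⬝ᵥ (D₁ *ᵥ (J *ᵥ (A *ᵥ fun _ => 1))) = 1 / 2
  d₂ : b ⬝ᵥ (D₂ *ᵥ (A *ᵥ fun _ => 1)) = 1 / 2
  d₁d₁ : b ⬝ᵥ (D₁ *ᵥ (J *ᵥ (A *ᵥ (D₁ *ᵥ (J *ᵥ (A *ᵥ fun _ => 1)))))) = 1 / 6
  d₁d₂ : b ⬝ᵥ (D₁ *ᵥ (J *ᵥ (A *ᵥ (D₂ *ᵥ (A *ᵥ fun _ => 1))))) = 1 / 6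
  d₂d₁ : b ⬝ᵥ (D₂ *ᵥ (A *ᵥ (D₁ *ᵥ (J *ᵥ (A *ᵥ fun _ => 1))))) = 1 / 6
  d₂d₂ : b ⬝ᵥ (D₂ *ᵥ (A *ᵥ (D₂ *ᵥ (A *ᵥ fun _ => 1)))) = 1 / 6
  sq₁ : b ⬝ᵥ ((D₁ *ᵥ (J *ᵥ (A *ᵥ fun _ => 1))) * (D₁ *ᵥ (J *ᵥ (A *ᵥ fun _ => 1)))) = 1 / 3
  mul₁₂ : b ⬝ᵥ ((D₁ *ᵥ (J *ᵥ (A *ᵥ fun _ => 1))) * (D₂ *ᵥ (A *ᵥ fun _ => 1))) = 1 / 3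
  sq₂ : b ⬝ᵥ ((D₂ *ᵥ (A *ᵥ fun _ => 1)) * (D₂ *ᵥ (A *ᵥ fun _ => 1))) = 1 / 3

variable {A D₁ D₂ J} in
theorem ThirdOrderConditions.dotProduct_slopeCoeff₁ {b : Fin s → ℝ}
    (hb : ThirdOrderConditions A D₁ D₂ J b) (v₀ : ℝ) :
    b ⬝ᵥ slopeCoeff₁ A D₁ D₂ J f₁ f₂ v₀
      = (deriv f₁ v₀ * f₂ v₀ + f₁ v₀ * deriv f₂ v₀) * (f₁ v₀ * f₂ v₀) / 2 := by
  simp only [slopeCoeff₁, stageTerm₁, mulVec_smul, dotProduct_add, dotProduct_smul, hb.d₁, hb.d₂,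
    smul_eq_mul]
  ring

variable {A D₁ D₂ J} in
theorem ThirdOrderConditions.dotProduct_slopeCoeff₂ {b : Fin s → ℝ}
    (hb : ThirdOrderConditions A D₁ D₂ J b) (v₀ : ℝ) :
    b ⬝ᵥ slopeCoeff₂ A D₁ D₂ J f₁ f₂ v₀
      = ((deriv (deriv f₁) v₀ * f₂ v₀ + 2 * (deriv f₁ v₀ * deriv f₂ v₀)
          + f₁ v₀ * deriv (deriv f₂) v₀) * (f₁ v₀ * f₂ v₀)
        + (deriv f₁ v₀ * f₂ v₀ + f₁ v₀ * deriv f₂ v₀) ^ 2) * (f₁ v₀ * f₂ v₀) / 6 := by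
  simp only [slopeCoeff₂, stageTerm₂_eq_mulVec_slopeCoeff₁, slopeCoeff₁, stageTerm₁, mulVec_add,
    mulVec_smul, smul_mul_smul_comm, dotProduct_add, dotProduct_smul, hb.d₁d₁, hb.d₁d₂, hb.d₂d₁,
    hb.d₂d₂, hb.sq₁, hb.mul₁₂, hb.sq₂, smul_eq_mul]
  ring

section Residuals

variable (hf₁ : ContDiff ℝ 3 f₁) (hf₂ : ContDiff ℝ 3 f₂)
  (hD₁ : (D₁ *ᵥ fun _ => 1) = fun _ => 1) (hD₂ : (D₂ *ᵥ fun _ => 1) = fun _ => 1)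
  {ι : Type*} {l : Filter ι} {v₀ τ : ι → ℝ} (hτ : τ =O[l] fun _ => (1 : ℝ))
  (hv₀ : v₀ =O[l] fun _ => (1 : ℝ))
include hf₁ hf₂ hD₁ hD₂ hτ hv₀

theorem isBigO_stageSlope_sub (j : Fin s) :
    (fun i => stageSlope A D₁ D₂ J f₁ f₂ (v₀ i) (τ i) j - (f₁ (v₀ i) * f₂ (v₀ i)
      + τ i * slopeCoeff₁ A D₁ D₂ J f₁ f₂ (v₀ i) j
      + τ i ^ 2 * slopeCoeff₂ A D₁ D₂ J f₁ f₂ (v₀ i) j)) =O[l] fun i => τ i ^ 3 := by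
  have := continuous_stageTerm₁ A f₁ f₂ hf₁.continuous hf₂.continuous
  have := continuous_stageTerm₂ A D₁ D₂ J f₁ f₂ (hf₁.of_le (by norm_num)) (hf₂.of_le (by norm_num))
  have hbdd {g : ℝ → ℝ} (hg : Continuous g) : (fun i => g (v₀ i)) =O[l] fun _ => (1 : ℝ) :=
    hg.isBigO_one_comp hv₀
  refine (hf₁.isBigO_comp_mul_comp_sub_expansion hf₂ hτ hv₀
    (hbdd (g := fun v => (D₁ *ᵥ (J *ᵥ stageTerm₁ A f₁ f₂ v)) j) (by fun_prop))
    (hbdd (g := fun v => (D₁ *ᵥ (J *ᵥ stageTerm₂ A D₁ D₂ J f₁ f₂ v)) j) (by fun_prop))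
    (hbdd (g := fun v => (D₂ *ᵥ stageTerm₁ A f₁ f₂ v) j) (by fun_prop))
    (hbdd (g := fun v => (D₂ *ᵥ stageTerm₂ A D₁ D₂ J f₁ f₂ v) j) (by fun_prop))).congr_left
    fun i => ?_
  unfold stageSlope truncStageHat truncStage
  rw [mulVec_const_add_of_mulVec_one hD₁, mulVec_const_add_of_mulVec_one hD₂]
  simp only [slopeCoeff₁, slopeCoeff₂, Pi.add_apply, Pi.smul_apply, Pi.mul_apply, smul_eq_mul]
  ring

theorem isBigO_taylor_sub_oneStep {b : Fin s → ℝ} (hb : ThirdOrderConditions A D₁ D₂ J b) :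
    (fun i => (∑ k ∈ range 4, (lieDeriv fun x => f₁ x * f₂ x)^[k] id (v₀ i) * τ i ^ k / k !)
      - v₀ i - τ i * (b ⬝ᵥ stageSlope A D₁ D₂ J f₁ f₂ (v₀ i) (τ i))) =O[l] fun i => τ i ^ 4 := by
  have hsum := IsBigO.fun_sum (s := univ) fun j _ =>
    (isBigO_stageSlope_sub A D₁ D₂ J f₁ f₂ hf₁ hf₂ hD₁ hD₂ hτ hv₀ j).const_mul_left (b j)
  refine (((isBigO_refl τ l).mul hsum).neg_left.congr_right fun i => by ring).congr_left
    fun i => ?_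
  rw [sum_taylor_lieDeriv_mul (hf₁.of_le (by norm_num)) (hf₂.of_le (by norm_num))]
  have hsplit : ∑ j, b j * (stageSlope A D₁ D₂ J f₁ f₂ (v₀ i) (τ i) j
      - (f₁ (v₀ i) * f₂ (v₀ i) + τ i * slopeCoeff₁ A D₁ D₂ J f₁ f₂ (v₀ i) j
        + τ i ^ 2 * slopeCoeff₂ A D₁ D₂ J f₁ f₂ (v₀ i) j))
      = b ⬝ᵥ stageSlope A D₁ D₂ J f₁ f₂ (v₀ i) (τ i) - (f₁ (v₀ i) * f₂ (v₀ i) * ∑ j, b j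
        + τ i * (b ⬝ᵥ slopeCoeff₁ A D₁ D₂ J f₁ f₂ (v₀ i))
        + τ i ^ 2 * (b ⬝ᵥ slopeCoeff₂ A D₁ D₂ J f₁ f₂ (v₀ i))) := by
    simp only [dotProduct, mul_sum, ← sum_add_distrib, ← sum_sub_distrib]
    exact sum_congr rfl fun j _ => by ring
  rw [hsplit, hb.sum_eq, hb.dotProduct_slopeCoeff₁, hb.dotProduct_slopeCoeff₂]
  ring

theorem isBigO_truncStage_sub :
    (fun i k => truncStage A D₁ D₂ J f₁ f₂ (v₀ i) (τ i) k - v₀ i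
      - τ i * ∑ j, A k j * stageSlope A D₁ D₂ J f₁ f₂ (v₀ i) (τ i) j) =O[l] fun i => τ i ^ 3 := by
  refine isBigO_pi.mpr fun k => ?_
  have hfirst (j : Fin s) : (fun i => stageSlope A D₁ D₂ J f₁ f₂ (v₀ i) (τ i) j
      - (f₁ (v₀ i) * f₂ (v₀ i) + τ i * slopeCoeff₁ A D₁ D₂ J f₁ f₂ (v₀ i) j))
      =O[l] fun i => τ i ^ 2 :=
    (((isBigO_stageSlope_sub A D₁ D₂ J f₁ f₂ hf₁ hf₂ hD₁ hD₂ hτ hv₀ j).trans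
      (hτ.pow_of_le (by norm_num))).add
      (((continuous_apply j).comp (continuous_slopeCoeff₂ A D₁ D₂ J f₁ f₂
        (hf₁.of_le (by norm_num)) (hf₂.of_le (by norm_num)))).isBigO_one_comp hv₀
        |>.bounded_mul (isBigO_refl (fun i => τ i ^ 2) l))).congr_left fun i => by
      simp only [Function.comp_apply]; ring
  have hsum := IsBigO.fun_sum (s := univ) fun j _ => (hfirst j).const_mul_left (A k j)
  refine (((isBigO_refl τ l).mul hsum).neg_left.congr_right fun i => by ring).congr_left
    fun i => ?_
  rw [truncStage_eq]
  simp only [mul_sub, sum_sub_distrib]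
  ring

end Residuals

end Scheme

end

theorem stmt0_general (s : ℕ)
    (A D1 D2 : Matrix (Fin s) (Fin s) ℝ)
    (b : Fin s → ℝ)
    (c : Fin s → ℝ) (hc : c = A *ᵥ fun _ => 1)
    (hD1row : (D1 *ᵥ fun _ => 1) = fun _ => 1)
    (hD2row : (D2 *ᵥ fun _ => 1) = fun _ => 1)
    (J : Matrix (Fin s) (Fin s) ℝ)
    (ord1 : ∑ i, b i = 1)
    (ord2a : b ⬝ᵥ (D1 *ᵥ (J *ᵥ c)) = 1 / 2)
    (ord2b : b ⬝ᵥ (D2 *ᵥ c) = 1 / 2)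
    (ord3a : b ⬝ᵥ (D1 *ᵥ (J *ᵥ (A *ᵥ (D1 *ᵥ (J *ᵥ c))))) = 1 / 6)
    (ord3b : b ⬝ᵥ (D1 *ᵥ (J *ᵥ (A *ᵥ (D2 *ᵥ c)))) = 1 / 6)
    (ord3c : b ⬝ᵥ (D2 *ᵥ (A *ᵥ (D1 *ᵥ (J *ᵥ c)))) = 1 / 6)
    (ord3d : b ⬝ᵥ (D2 *ᵥ (A *ᵥ (D2 *ᵥ c))) = 1 / 6)
    (ord3e : b ⬝ᵥ ((D1 *ᵥ (J *ᵥ c)) * (D1 *ᵥ (J *ᵥ c))) = 1 / 3)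
    (ord3f : b ⬝ᵥ ((D1 *ᵥ (J *ᵥ c)) * (D2 *ᵥ c)) = 1 / 3)
    (ord3g : b ⬝ᵥ ((D2 *ᵥ c) * (D2 *ᵥ c)) = 1 / 3)
    (f₁ f₂ : ℝ → ℝ) (hf₁ : ContDiff ℝ 3 f₁) (hf₂ : ContDiff ℝ 3 f₂)
    (T : ℝ)
    (u : ℝ → ℝ)
    (hu : ∀ t ∈ Set.Icc (0 : ℝ) T,
      HasDerivWithinAt u (f₁ (u t) * f₂ (u t)) (Set.Icc 0 T) t) :
    ∃ C > 0, ∀ τ : ℝ, 0 < τ → τ ≤ 1 → ∀ t ∈ Set.Icc (0 : ℝ) T, t + τ ≤ T →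
      let v₀ : ℝ := u t
      let v1 : Fin s → ℝ := (f₁ v₀ * f₂ v₀) • c
      let v2 : Fin s → ℝ :=
        (deriv f₁ v₀ * f₂ v₀) • (A *ᵥ (D1 *ᵥ (J *ᵥ v1)))
          + (f₁ v₀ * deriv f₂ v₀) • (A *ᵥ (D2 *ᵥ v1))
      let v : Fin s → ℝ := fun i => v₀ + τ * v1 i + τ ^ 2 * v2 i
      let vhat : Fin s → ℝ := fun i => v₀ + τ * (J *ᵥ v1) i + τ ^ 2 * (J *ᵥ v2) i
      |u (t + τ) - v₀
          - τ * ∑ i, b i * (f₁ ((D1 *ᵥ vhat) i) * f₂ ((D2 *ᵥ v) i))| ≤ C * τ ^ 4 ∧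
      ∀ i : Fin s,
        |v i - v₀
            - τ * ∑ j, A i j * (f₁ ((D1 *ᵥ vhat) j) * f₂ ((D2 *ᵥ v) j))| ≤ C * τ ^ 3 := by
  subst hc
  have hb : ThirdOrderConditions A D1 D2 J b :=
    ⟨ord1, ord2a, ord2b, ord3a, ord3b, ord3c, ord3d, ord3e, ord3f, ord3g⟩
  let S : Set (ℝ × ℝ) := {p | p.1 ∈ Icc 0 T ∧ 0 < p.2 ∧ p.2 ≤ 1 ∧ p.1 + p.2 ≤ T}
  have hτ : (fun p : ℝ × ℝ => p.2) =O[𝓟 S] fun _ => (1 : ℝ) :=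
    IsBigO.of_bound 1 (eventually_principal.mpr fun p hp => by simp [abs_of_pos hp.2.1, hp.2.2.1])
  have hv₀ : (fun p : ℝ × ℝ => u p.1) =O[𝓟 S] fun _ => (1 : ℝ) :=
    (ContinuousOn.isBigO_principal (fun t ht => (hu t ht).continuousWithinAt) isCompact_Icc
      (by norm_num)).comp_tendsto (tendsto_principal_principal.mpr fun p hp => hp.1)
  have hstep : (fun p : ℝ × ℝ => u (p.1 + p.2) - u p.1
      - p.2 * (b ⬝ᵥ stageSlope A D1 D2 J f₁ f₂ (u p.1) p.2)) =O[𝓟 S] fun p => p.2 ^ 4 :=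
    ((isBigO_sub_taylor_of_hasDerivWithinAt 3 (hf₁.mul hf₂) hu).mono
    (principal_mono.mpr fun p hp => ⟨hp.1, hp.2.1.le, hp.2.2.2⟩)).add
    (isBigO_taylor_sub_oneStep A D1 D2 J f₁ f₂ hf₁ hf₂ hD1row hD2row hτ hv₀ hb)
    |>.congr_left fun p => by ring
  obtain ⟨C₁, hC₁, hstep⟩ := hstep.exists_pos
  obtain ⟨C₂, hC₂, hstage⟩ :=
    (isBigO_truncStage_sub A D1 D2 J f₁ f₂ hf₁ hf₂ hD1row hD2row hτ hv₀).exists_pos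
  rw [isBigOWith_principal] at hstep hstage
  refine ⟨max C₁ C₂, lt_max_of_lt_left hC₁, fun τ hτ0 hτ1 t ht htT => ⟨?_, fun i => ?_⟩⟩
  · have h := hstep (t, τ) ⟨ht, hτ0, hτ1, htT⟩
    simp only [Real.norm_eq_abs, abs_of_pos (pow_pos hτ0 4)] at h
    exact h.trans (by gcongr; exact le_max_left _ _)
  · have h := (norm_le_pi_norm _ i).trans (hstage (t, τ) ⟨ht, hτ0, hτ1, htT⟩)
    simp only [Real.norm_eq_abs, abs_of_pos (pow_pos hτ0 3)] at h
    exact h.trans (by gcongr; exact le_max_right _ _)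

/-- Local truncation error (third-order consistency) of a product-type IMEX
Runge–Kutta scheme for `u' = f₁(u)·f₂(u)`: under the listed order conditions
there is a constant `C > 0` such that for all `τ ∈ (0,1]` and `t ∈ [0,T]` with
`t + τ ≤ T`, the one-step residual is `≤ C τ⁴` and each stage residual of the
truncated asymptotic stage expansion `v` is `≤ C τ³`. -/
theorem stmt0 (s : ℕ) (hs : 1 ≤ s)
    (A D1 D2 : Matrix (Fin s) (Fin s) ℝ)
    (hAlt : ∀ i j : Fin s, i < j → A i j = 0)
    (hD1lt : ∀ i j : Fin s, i < j → D1 i j = 0)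
    (hD2lt : ∀ i j : Fin s, i < j → D2 i j = 0)
    (b : Fin s → ℝ)
    (c : Fin s → ℝ) (hc : c = A *ᵥ fun _ => 1)
    (hD1row : (D1 *ᵥ fun _ => 1) = fun _ => 1)
    (hD2row : (D2 *ᵥ fun _ => 1) = fun _ => 1)
    (J : Matrix (Fin s) (Fin s) ℝ)
    (hJ : J = Matrix.of fun i j : Fin s => if (i : ℕ) = (j : ℕ) + 1 then 1 else 0)
    (ord1 : ∑ i, b i = 1)
    (ord2a : b ⬝ᵥ (D1 *ᵥ (J *ᵥ c)) = 1 / 2)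
    (ord2b : b ⬝ᵥ (D2 *ᵥ c) = 1 / 2)
    (ord3a : b ⬝ᵥ (D1 *ᵥ (J *ᵥ (A *ᵥ (D1 *ᵥ (J *ᵥ c))))) = 1 / 6)
    (ord3b : b ⬝ᵥ (D1 *ᵥ (J *ᵥ (A *ᵥ (D2 *ᵥ c)))) = 1 / 6)
    (ord3c : b ⬝ᵥ (D2 *ᵥ (A *ᵥ (D1 *ᵥ (J *ᵥ c)))) = 1 / 6)
    (ord3d : b ⬝ᵥ (D2 *ᵥ (A *ᵥ (D2 *ᵥ c))) = 1 / 6)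
    (ord3e : b ⬝ᵥ ((D1 *ᵥ (J *ᵥ c)) * (D1 *ᵥ (J *ᵥ c))) = 1 / 3)
    (ord3f : b ⬝ᵥ ((D1 *ᵥ (J *ᵥ c)) * (D2 *ᵥ c)) = 1 / 3)
    (ord3g : b ⬝ᵥ ((D2 *ᵥ c) * (D2 *ᵥ c)) = 1 / 3)
    (f₁ f₂ : ℝ → ℝ) (hf₁ : ContDiff ℝ 3 f₁) (hf₂ : ContDiff ℝ 3 f₂)
    (T : ℝ) (hT : 0 < T)
    (u : ℝ → ℝ)
    (hu : ∀ t ∈ Set.Icc (0 : ℝ) T,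
      HasDerivWithinAt u (f₁ (u t) * f₂ (u t)) (Set.Icc 0 T) t) :
    ∃ C > 0, ∀ τ : ℝ, 0 < τ → τ ≤ 1 → ∀ t ∈ Set.Icc (0 : ℝ) T, t + τ ≤ T →
      let v₀ : ℝ := u t
      let v1 : Fin s → ℝ := (f₁ v₀ * f₂ v₀) • c
      let v2 : Fin s → ℝ :=
        (deriv f₁ v₀ * f₂ v₀) • (A *ᵥ (D1 *ᵥ (J *ᵥ v1)))
          + (f₁ v₀ * deriv f₂ v₀) • (A *ᵥ (D2 *ᵥ v1))
      let v : Fin s → ℝ := fun i => v₀ + τ * v1 i + τ ^ 2 * v2 i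
      let vhat : Fin s → ℝ := fun i => v₀ + τ * (J *ᵥ v1) i + τ ^ 2 * (J *ᵥ v2) i
      |u (t + τ) - v₀
          - τ * ∑ i, b i * (f₁ ((D1 *ᵥ vhat) i) * f₂ ((D2 *ᵥ v) i))| ≤ C * τ ^ 4 ∧
      ∀ i : Fin s,
        |v i - v₀
            - τ * ∑ j, A i j * (f₁ ((D1 *ᵥ vhat) j) * f₂ ((D2 *ᵥ v) j))| ≤ C * τ ^ 3 :=
  stmt0_general s A D1 D2 b c hc hD1row hD2row J ord1 ord2a ord2b ord3a ord3b ord3c ord3d ord3e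
    ord3f ord3g f₁ f₂ hf₁ hf₂ T u hu
end

section
/- Let H be a real inner product space and L : H → H a linear map that is symmetric, i.e. ⟨Lx, y⟩ = ⟨x, Ly⟩ for all x, y ∈ H. Let s ≥ 1, A = (a_{ij}) and D = (d_{ij}) be s×s real matrices with Σ_{j=1}^s d_{ij} = 1 for every i, and b ∈ ℝ^s. Let τ ∈ ℝ, u₀ ∈ H and w₁, …, w_s ∈ H, and define u_i = u₀ + τ Σ_{j=1}^s a_{ij} w_j for i = 1, …, s, ũ_i = Σ_{j=1}^s d_{ij} u_j, and m̃ = u₀ + τ Σ_{j=1}^s b_j w_j. Then ⟨L m̃, m̃⟩ = ⟨L u₀, u₀⟩ + 2τ Σ_{i=1}^s b_i ⟨w_i, L ũ_i⟩ − τ² Σ_{i,j=1}^s q_{ij} ⟨w_i, L w_j⟩, where q_{ij} = Σ_{k=1}^s b_i d_{ik} a_{kj} + Σ_{k=1}^s b_j d_{jk} a_{ki} − b_i b_j, i.e. Q = (q_{ij}) = BDA + (BDA)ᵀ − bbᵀ with B = diag(b). -/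
open RealInnerProductSpace Matrix

/-- Quadratic energy identity for product-type IMEX Runge–Kutta schemes:
with `u_i = u₀ + τ Σ_j a_{ij} w_j`, `ũ_i = Σ_j d_{ij} u_j` and
`m̃ = u₀ + τ Σ_j b_j w_j`, and `L` symmetric, one has
`⟨L m̃, m̃⟩ = ⟨L u₀, u₀⟩ + 2τ Σ_i b_i ⟨w_i, L ũ_i⟩ − τ² Σ_{ij} q_{ij} ⟨w_i, L w_j⟩`
with `q_{ij} = Σ_k b_i d_{ik} a_{kj} + Σ_k b_j d_{jk} a_{ki} − b_i b_j`. -/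
theorem stmt1 {H : Type*} [NormedAddCommGroup H] [InnerProductSpace ℝ H]
    (L : H →ₗ[ℝ] H) (hL : ∀ x y : H, ⟪L x, y⟫ = ⟪x, L y⟫)
    (s : ℕ) (hs : 1 ≤ s)
    (A D : Matrix (Fin s) (Fin s) ℝ)
    (hD : ∀ i, ∑ j, D i j = 1)
    (b : Fin s → ℝ) (τ : ℝ) (u₀ : H) (w : Fin s → H)
    (u : Fin s → H) (hu : ∀ i, u i = u₀ + τ • ∑ j, A i j • w j)
    (ut : Fin s → H) (hut : ∀ i, ut i = ∑ j, D i j • u j)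
    (mt : H) (hmt : mt = u₀ + τ • ∑ j, b j • w j) :
    ⟪L mt, mt⟫ = ⟪L u₀, u₀⟫
      + 2 * τ * ∑ i, b i * ⟪w i, L (ut i)⟫
      - τ ^ 2 * ∑ i, ∑ j,
          ((∑ k, b i * D i k * A k j) + (∑ k, b j * D j k * A k i) - b i * b j)
            * ⟪w i, L (w j)⟫ := by
  have hc : ∀ i j, ⟪w i, L (w j)⟫ = ⟪w j, L (w i)⟫ := by
    intro i j
    rw [← hL, real_inner_comm]
  set W : H := ∑ j, b j • w j with hW
  have hxW : ∀ x : H, ⟪x, L W⟫ = ∑ j, b j * ⟪x, L (w j)⟫ := by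
    intro x
    rw [hW, map_sum, inner_sum]
    simp [real_inner_smul_right]
  have hLW : ⟪L W, W⟫ = ∑ i, ∑ j, b i * b j * ⟪w i, L (w j)⟫ := by
    rw [hL, hW, sum_inner]
    refine Finset.sum_congr rfl fun i _ => ?_
    rw [real_inner_smul_left, hxW, Finset.mul_sum]
    ring_nf
  have hLu₀W : ⟪L u₀, W⟫ = ∑ i, b i * ⟪w i, L u₀⟫ := by
    rw [real_inner_comm, hW, sum_inner]
    refine Finset.sum_congr rfl fun i _ => ?_
    rw [real_inner_smul_left]
  have h1 : ⟪L mt, mt⟫ = ⟪L u₀, u₀⟫ + 2 * τ * ⟪L u₀, W⟫ + τ ^ 2 * ⟪L W, W⟫ := by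
    rw [hmt]
    have hLWu₀ : ⟪L W, u₀⟫ = ⟪L u₀, W⟫ := by rw [hL, real_inner_comm]
    simp only [map_add, LinearMap.map_smul, inner_add_left, inner_add_right,
      real_inner_smul_left, real_inner_smul_right, hLWu₀]
    ring
  have h2 : ∀ i, ⟪w i, L (ut i)⟫
      = ⟪w i, L u₀⟫ + τ * ∑ j, (∑ k, D i k * A k j) * ⟪w i, L (w j)⟫ := by
    intro i
    rw [hut]
    have key : ∀ k : Fin s, ⟪w i, L (u k)⟫
        = ⟪w i, L u₀⟫ + τ * ∑ j, A k j * ⟪w i, L (w j)⟫ := by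
      intro k
      rw [hu, map_add, LinearMap.map_smul, inner_add_right, real_inner_smul_right,
        map_sum, inner_sum]
      simp [LinearMap.map_smul, real_inner_smul_right]
    rw [map_sum, inner_sum]
    simp only [LinearMap.map_smul, real_inner_smul_right, key]
    rw [Finset.sum_congr rfl (fun k _ => mul_add (D i k) _ _),
      Finset.sum_add_distrib, ← Finset.sum_mul, hD, one_mul]
    congr 1
    simp only [Finset.mul_sum, Finset.sum_mul]
    rw [Finset.sum_comm]
    exact Finset.sum_congr rfl fun k _ => Finset.sum_congr rfl fun j _ => by ring
  have h3 : ∑ i, b i * ⟪w i, L (ut i)⟫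
      = ⟪L u₀, W⟫ + τ * ∑ i, ∑ j, (∑ k, b i * D i k * A k j) * ⟪w i, L (w j)⟫ := by
    rw [hLu₀W]
    simp only [h2, mul_add]
    rw [Finset.sum_add_distrib]
    congr 1
    rw [Finset.mul_sum]
    refine Finset.sum_congr rfl fun i _ => ?_
    have e : ∀ j, (∑ k, b i * D i k * A k j) = b i * ∑ k, D i k * A k j := by
      intro j
      rw [Finset.mul_sum]
      exact Finset.sum_congr rfl fun k _ => by ring
    simp only [Finset.mul_sum]
    exact Finset.sum_congr rfl fun j _ => by rw [e j]; ring
  have h4 : ∑ i, ∑ j, (∑ k, b j * D j k * A k i) * ⟪w i, L (w j)⟫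
      = ∑ i, ∑ j, (∑ k, b i * D i k * A k j) * ⟪w i, L (w j)⟫ := by
    rw [Finset.sum_comm]
    refine Finset.sum_congr rfl fun i _ => Finset.sum_congr rfl fun j _ => ?_
    rw [hc j i]
  have h5 : ∑ i, ∑ j,
      ((∑ k, b i * D i k * A k j) + (∑ k, b j * D j k * A k i) - b i * b j)
        * ⟪w i, L (w j)⟫
      = 2 * (∑ i, ∑ j, (∑ k, b i * D i k * A k j) * ⟪w i, L (w j)⟫)
        - ∑ i, ∑ j, b i * b j * ⟪w i, L (w j)⟫ := by
    have e : ∀ i j : Fin s,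
        ((∑ k, b i * D i k * A k j) + (∑ k, b j * D j k * A k i) - b i * b j)
          * ⟪w i, L (w j)⟫
        = (∑ k, b i * D i k * A k j) * ⟪w i, L (w j)⟫
          + (∑ k, b j * D j k * A k i) * ⟪w i, L (w j)⟫
          - b i * b j * ⟪w i, L (w j)⟫ := fun i j => by ring
    simp only [e, Finset.sum_sub_distrib, Finset.sum_add_distrib, h4]
    ring
  rw [h1, h3, hLW, h5]
  ring
end

section
/- Let H be a real inner product space and L : H → H a linear map that is symmetric (⟨Lx, y⟩ = ⟨x, Ly⟩ for all x, y) and positive semi-definite (⟨Lx, x⟩ ≥ 0 for all x). Let s ≥ 1, A = (a_{ij}) and D = (d_{ij}) be s×s real matrices with Σ_{j=1}^s d_{ij} = 1 for every i, and b ∈ ℝ^s with b_i ≥ 0 for all i. Let τ ≥ 0, u₀ ∈ H and w₁, …, w_s ∈ H, and define u_i = u₀ + τ Σ_{j=1}^s a_{ij} w_j for i = 1, …, s, ũ_i = Σ_{j=1}^s d_{ij} u_j, and m̃ = u₀ + τ Σ_{j=1}^s b_j w_j. Assume ⟨w_i, L ũ_i⟩ ≤ 0 for every i, and assume the s×s matrix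 Q = BDA + (BDA)ᵀ − bbᵀ (with B = diag(b)) is positive semi-definite. Then ⟨L m̃, m̃⟩ ≤ ⟨L u₀, u₀⟩. -/
open RealInnerProductSpace Matrix

open scoped MatrixOrder in
lemma psd_trace {H : Type*} [NormedAddCommGroup H] [InnerProductSpace ℝ H]
    (L : H →ₗ[ℝ] H) (hLpos : ∀ x : H, 0 ≤ ⟪L x, x⟫)
    {s : ℕ} (w : Fin s → H) (Q : Matrix (Fin s) (Fin s) ℝ) (hQ : Q.PosSemidef) :
    0 ≤ ∑ i, ∑ j, Q i j * ⟪L (w i), w j⟫ := by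
  classical
  set S := CFC.sqrt Q with hS
  have hSS : S * S = Q := CFC.sqrt_mul_sqrt_self Q (Matrix.nonneg_iff_posSemidef.mpr hQ)
  have hSsym : ∀ i j, S i j = S j i := by
    intro i j
    simpa using (Matrix.nonneg_iff_posSemidef.mp (CFC.sqrt_nonneg Q)).1.apply j i
  have key : ∀ k, ⟪L (∑ i, S k i • w i), ∑ j, S k j • w j⟫
      = ∑ i, ∑ j, S k i * S k j * ⟪L (w i), w j⟫ := by
    intro k
    rw [map_sum, sum_inner]
    refine Finset.sum_congr rfl fun i _ => ?_
    rw [LinearMap.map_smul, real_inner_smul_left, inner_sum, Finset.mul_sum]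
    refine Finset.sum_congr rfl fun j _ => ?_
    rw [real_inner_smul_right]
    ring
  have h1 : 0 ≤ ∑ k, ∑ i, ∑ j, S k i * S k j * ⟪L (w i), w j⟫ := by
    refine Finset.sum_nonneg fun k _ => ?_
    rw [← key k]
    exact hLpos _
  calc (0:ℝ) ≤ ∑ k, ∑ i, ∑ j, S k i * S k j * ⟪L (w i), w j⟫ := h1
    _ = ∑ i, ∑ j, Q i j * ⟪L (w i), w j⟫ := by
        rw [Finset.sum_comm]
        refine Finset.sum_congr rfl fun i _ => ?_
        rw [Finset.sum_comm]
        refine Finset.sum_congr rfl fun j _ => ?_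
        rw [← hSS, Matrix.mul_apply, Finset.sum_mul]
        refine Finset.sum_congr rfl fun k _ => ?_
        rw [hSsym k i]


/-- Energy dissipation for product-type IMEX Runge–Kutta schemes: if `L` is
symmetric positive semi-definite, the weights `b` are nonnegative,
`⟨w_i, L ũ_i⟩ ≤ 0` for every stage, and the matrix
`Q = BDA + (BDA)ᵀ − bbᵀ` is positive semi-definite, then
`⟨L m̃, m̃⟩ ≤ ⟨L u₀, u₀⟩`. -/
theorem stmt2 {H : Type*} [NormedAddCommGroup H] [InnerProductSpace ℝ H]
    (L : H →ₗ[ℝ] H) (hL : ∀ x y : H, ⟪L x, y⟫ = ⟪x, L y⟫)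
    (hLpos : ∀ x : H, 0 ≤ ⟪L x, x⟫)
    (s : ℕ) (hs : 1 ≤ s)
    (A D : Matrix (Fin s) (Fin s) ℝ)
    (hD : ∀ i, ∑ j, D i j = 1)
    (b : Fin s → ℝ) (hb : ∀ i, 0 ≤ b i)
    (τ : ℝ) (hτ : 0 ≤ τ) (u₀ : H) (w : Fin s → H)
    (u : Fin s → H) (hu : ∀ i, u i = u₀ + τ • ∑ j, A i j • w j)
    (ut : Fin s → H) (hut : ∀ i, ut i = ∑ j, D i j • u j)
    (mt : H) (hmt : mt = u₀ + τ • ∑ j, b j • w j)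
    (hdiss : ∀ i, ⟪w i, L (ut i)⟫ ≤ 0)
    (hQ : (Matrix.diagonal b * D * A + (Matrix.diagonal b * D * A)ᵀ
            - Matrix.vecMulVec b b).PosSemidef) :
    ⟪L mt, mt⟫ ≤ ⟪L u₀, u₀⟫ := by
  classical
  set Q : Matrix (Fin s) (Fin s) ℝ :=
    Matrix.diagonal b * D * A + (Matrix.diagonal b * D * A)ᵀ - Matrix.vecMulVec b b with hQdef
  set G : Fin s → Fin s → ℝ := fun i j => ⟪L (w i), w j⟫ with hGdef
  have hGsymm : ∀ i j, G i j = G j i := by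
    intro i j
    simp only [hGdef]
    rw [hL, real_inner_comm]
  -- ut in terms of w
  have hut' : ∀ i, ut i = u₀ + τ • ∑ j, (D * A) i j • w j := by
    intro i
    rw [hut]
    have e1 : ∀ j : Fin s, D i j • u j
        = D i j • u₀ + τ • ∑ k, (D i j * A j k) • w k := by
      intro j
      rw [hu j, smul_add, smul_comm (D i j) τ]
      congr 1
      rw [Finset.smul_sum]
      congr 1
      exact Finset.sum_congr rfl fun k _ => by rw [smul_smul]
    simp only [e1, Finset.sum_add_distrib, ← Finset.sum_smul, hD, one_smul]
    congr 1
    rw [← Finset.smul_sum]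
    congr 1
    rw [Finset.sum_comm]
    refine Finset.sum_congr rfl fun k _ => ?_
    rw [← Finset.sum_smul, Matrix.mul_apply]
  -- stage dissipation expanded
  have hB : ∀ i, ⟪w i, L (ut i)⟫ = ⟪w i, L u₀⟫ + τ * ∑ j, (D * A) i j * G i j := by
    intro i
    rw [hut' i, map_add, inner_add_right, LinearMap.map_smul, real_inner_smul_right,
      map_sum, inner_sum]
    congr 1
    congr 1
    refine Finset.sum_congr rfl fun j _ => ?_
    rw [LinearMap.map_smul, real_inner_smul_right, ← hL]
  -- energy expansion
  have hC : ⟪L mt, mt⟫ = ⟪L u₀, u₀⟫ + 2*τ*(∑ i, b i * ⟪w i, L u₀⟫)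
      + τ^2 * ∑ i, ∑ j, b i * b j * G i j := by
    have h1 : ⟪L u₀, ∑ j, b j • w j⟫ = ∑ i, b i * ⟪w i, L u₀⟫ := by
      rw [inner_sum]
      refine Finset.sum_congr rfl fun i _ => ?_
      rw [real_inner_smul_right, real_inner_comm]
    have h2 : ⟪L (∑ j, b j • w j), u₀⟫ = ∑ i, b i * ⟪w i, L u₀⟫ := by
      rw [map_sum, sum_inner]
      refine Finset.sum_congr rfl fun i _ => ?_
      rw [LinearMap.map_smul, real_inner_smul_left, hL]
    have h3 : ⟪L (∑ i, b i • w i), ∑ j, b j • w j⟫ = ∑ i, ∑ j, b i * b j * G i j := by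
      rw [map_sum, sum_inner]
      refine Finset.sum_congr rfl fun i _ => ?_
      rw [LinearMap.map_smul, real_inner_smul_left, inner_sum, Finset.mul_sum]
      refine Finset.sum_congr rfl fun j _ => ?_
      rw [real_inner_smul_right]
      simp only [hGdef]
      ring
    rw [hmt]
    simp only [map_add, LinearMap.map_smul, inner_add_left, inner_add_right,
      real_inner_smul_left, real_inner_smul_right]
    rw [h1, h2, h3]
    ring
  -- sum of stage dissipation
  have hS1 : (∑ i, b i * ⟪w i, L (ut i)⟫) ≤ 0 :=
    Finset.sum_nonpos fun i _ => mul_nonpos_of_nonneg_of_nonpos (hb i) (hdiss i)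
  -- rewrite the linear term using stage dissipation
  have hXeq : ∑ i, b i * ⟪w i, L u₀⟫
      = (∑ i, b i * ⟪w i, L (ut i)⟫) - τ * ∑ i, ∑ j, b i * (D * A) i j * G i j := by
    have e : ∀ i, b i * ⟪w i, L u₀⟫
        = b i * ⟪w i, L (ut i)⟫ - τ * ∑ j, b i * ((D * A) i j * G i j) := by
      intro i
      rw [hB i, ← Finset.mul_sum]
      ring
    simp only [e, Finset.sum_sub_distrib]
    congr 1
    rw [Finset.mul_sum]
    refine Finset.sum_congr rfl fun i _ => ?_
    congr 1
    exact Finset.sum_congr rfl fun j _ => by ring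
  have hQsum : 0 ≤ ∑ i, ∑ j, Q i j * G i j := by
    simpa [hGdef] using psd_trace L hLpos w Q hQ
  have hQentry : ∀ i j, Q i j = b i * (D * A) i j + b j * (D * A) j i - b i * b j := by
    intro i j
    rw [hQdef]
    simp only [Matrix.sub_apply, Matrix.add_apply, Matrix.transpose_apply,
      Matrix.vecMulVec_apply, Matrix.mul_assoc, Matrix.diagonal_mul]
  have hswap : ∑ i, ∑ j, b j * (D * A) j i * G i j
      = ∑ i, ∑ j, b i * (D * A) i j * G i j := by
    rw [Finset.sum_comm]
    exact Finset.sum_congr rfl fun i _ => Finset.sum_congr rfl fun j _ => by rw [hGsymm]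
  have hQid : ∑ i, ∑ j, Q i j * G i j
      = 2 * (∑ i, ∑ j, b i * (D * A) i j * G i j) - ∑ i, ∑ j, b i * b j * G i j := by
    have step : ∑ i, ∑ j, Q i j * G i j
        = ∑ i, ∑ j, (b i * (D * A) i j * G i j + b j * (D * A) j i * G i j
            - b i * b j * G i j) := by
      refine Finset.sum_congr rfl fun i _ => Finset.sum_congr rfl fun j _ => ?_
      rw [hQentry]; ring
    rw [step]
    simp only [Finset.sum_add_distrib, Finset.sum_sub_distrib]
    rw [hswap]
    ring
  have e : ⟪L mt, mt⟫ = ⟪L u₀, u₀⟫ + 2*(τ * ∑ i, b i * ⟪w i, L (ut i)⟫)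
      - τ^2 * (∑ i, ∑ j, Q i j * G i j) := by
    rw [hC, hXeq, hQid]; ring
  have t1 : τ * (∑ i, b i * ⟪w i, L (ut i)⟫) ≤ 0 :=
    mul_nonpos_of_nonneg_of_nonpos hτ hS1
  have t2 : 0 ≤ τ^2 * (∑ i, ∑ j, Q i j * G i j) := mul_nonneg (sq_nonneg τ) hQsum
  rw [e]
  linarith
end

section
/- Let H be a real inner product space, s ≥ 1, A = (a_{ij}) an s×s real matrix, and b ∈ ℝ^s. Let τ ∈ ℝ, u₀ ∈ H and w₁, …, w_s ∈ H, and define u_i = u₀ + τ Σ_{j=1}^s a_{ij} w_j for i = 1, …, s, and m̃ = u₀ + τ Σ_{j=1}^s b_j w_j. Assume ⟨w_i, u_{i−1}⟩ = 0 for every i = 1, …, s (with u_0 = u₀), and assume the s×s matrix R = bbᵀ − BJA − (BJA)ᵀ is positive semi-definite, where B = diag(b) and J is the s×s shift matrix (J_{ij}=1 if i=j+1, else 0). Then ‖m̃‖ ≥ ‖u₀‖. -/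
open RealInnerProductSpace Matrix

lemma inner_sum_sum_aux {H : Type*} [NormedAddCommGroup H] [InnerProductSpace ℝ H]
    {s : ℕ} (c d : Fin s → ℝ) (w : Fin s → H) :
    ⟪∑ i, c i • w i, ∑ j, d j • w j⟫ = ∑ i, ∑ j, c i * d j * ⟪w i, w j⟫ := by
  rw [sum_inner]
  refine Finset.sum_congr rfl fun i _ => ?_
  rw [inner_sum]
  refine Finset.sum_congr rfl fun j _ => ?_
  rw [real_inner_smul_left, real_inner_smul_right]; ring


/-- Length increase for product-type IMEX Runge–Kutta schemes: if
`⟨w_i, u_{i−1}⟩ = 0` for every stage (with `u_{i-1} = u₀ + τ Σ_j (JA)_{ij} w_j`,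
`J` the shift matrix) and `R = bbᵀ − BJA − (BJA)ᵀ` is positive semi-definite,
then `‖m̃‖ ≥ ‖u₀‖`. -/
theorem stmt4 {H : Type*} [NormedAddCommGroup H] [InnerProductSpace ℝ H]
    (s : ℕ) (hs : 1 ≤ s)
    (A : Matrix (Fin s) (Fin s) ℝ) (b : Fin s → ℝ) (τ : ℝ)
    (u₀ : H) (w : Fin s → H)
    (J : Matrix (Fin s) (Fin s) ℝ)
    (hJ : J = Matrix.of fun i j : Fin s => if (i : ℕ) = (j : ℕ) + 1 then 1 else 0)
    (u : Fin s → H) (hu : ∀ i, u i = u₀ + τ • ∑ j, A i j • w j)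
    (mt : H) (hmt : mt = u₀ + τ • ∑ j, b j • w j)
    (horth : ∀ i, ⟪w i, u₀ + τ • ∑ j, (J * A) i j • w j⟫ = 0)
    (hR : (Matrix.vecMulVec b b - Matrix.diagonal b * J * A
            - (Matrix.diagonal b * J * A)ᵀ).PosSemidef) :
    ‖u₀‖ ≤ ‖mt‖ := by
  set R : Matrix (Fin s) (Fin s) ℝ :=
    Matrix.vecMulVec b b - Matrix.diagonal b * J * A - (Matrix.diagonal b * J * A)ᵀ with hRdef
  have hRe : ∀ i j, R i j = b i * b j - b i * (J * A) i j - b j * (J * A) j i := by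
    intro i j
    have h1 : (Matrix.diagonal b * J * A) i j = b i * (J * A) i j := by
      rw [Matrix.mul_assoc, Matrix.diagonal_mul]
    have h2 : (Matrix.diagonal b * J * A) j i = b j * (J * A) j i := by
      rw [Matrix.mul_assoc, Matrix.diagonal_mul]
    show (Matrix.vecMulVec b b - Matrix.diagonal b * J * A - (Matrix.diagonal b * J * A)ᵀ) i j = _
    rw [Matrix.sub_apply, Matrix.sub_apply, Matrix.vecMulVec_apply, Matrix.transpose_apply, h1, h2]
  -- positivity of the quadratic form sum
  have hS : 0 ≤ ∑ i, ∑ j, R i j * ⟪w i, w j⟫ := by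
    obtain ⟨C, hC⟩ : ∃ C : Matrix (Fin s) (Fin s) ℝ, R = Cᴴ * C := by
      open scoped MatrixOrder in
      obtain ⟨C, hC⟩ := CStarAlgebra.nonneg_iff_eq_star_mul_self.mp hR.nonneg
      exact ⟨C, hC⟩
    have hCe : ∀ i j, R i j = ∑ k, C k i * C k j := by
      intro i j
      rw [hC]
      simp [Matrix.mul_apply, Matrix.conjTranspose_apply]
    calc (0:ℝ) ≤ ∑ k, ⟪∑ i, C k i • w i, ∑ j, C k j • w j⟫ :=
          Finset.sum_nonneg fun k _ => real_inner_self_nonneg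
      _ = ∑ k, ∑ i, ∑ j, C k i * C k j * ⟪w i, w j⟫ :=
          Finset.sum_congr rfl fun k _ => inner_sum_sum_aux _ _ _
      _ = ∑ i, ∑ k, ∑ j, C k i * C k j * ⟪w i, w j⟫ := Finset.sum_comm
      _ = ∑ i, ∑ j, ∑ k, C k i * C k j * ⟪w i, w j⟫ :=
          Finset.sum_congr rfl fun i _ => Finset.sum_comm
      _ = ∑ i, ∑ j, R i j * ⟪w i, w j⟫ := by
          refine Finset.sum_congr rfl fun i _ => Finset.sum_congr rfl fun j _ => ?_
          rw [hCe, Finset.sum_mul]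
  -- orthogonality expanded
  have hp : ∀ i, ⟪u₀, w i⟫ = -(τ * ∑ j, (J * A) i j * ⟪w i, w j⟫) := by
    intro i
    have h := horth i
    rw [inner_add_right, inner_smul_right, inner_sum] at h
    simp only [real_inner_smul_right] at h
    rw [real_inner_comm]
    linarith
  -- norm computation
  have key : ‖mt‖ ^ 2 = ‖u₀‖ ^ 2 + τ ^ 2 * ∑ i, ∑ j, R i j * ⟪w i, w j⟫ := by
    rw [hmt, norm_add_sq_real]
    have h1 : ⟪u₀, τ • ∑ j, b j • w j⟫
        = -(τ ^ 2 * ∑ i, ∑ j, b i * (J * A) i j * ⟪w i, w j⟫) := by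
      rw [inner_smul_right, inner_sum]
      simp only [real_inner_smul_right, hp, mul_neg, Finset.sum_neg_distrib,
        Finset.mul_sum, neg_inj]
      exact Finset.sum_congr rfl fun i _ => Finset.sum_congr rfl fun j _ => by ring
    have h2 : ‖τ • ∑ j, b j • w j‖ ^ 2 = τ ^ 2 * ∑ i, ∑ j, b i * b j * ⟪w i, w j⟫ := by
      rw [← real_inner_self_eq_norm_sq, real_inner_smul_left, real_inner_smul_right,
        inner_sum_sum_aux]
      ring
    have h3 : ∑ i, ∑ j, R i j * ⟪w i, w j⟫
        = ∑ i, ∑ j, b i * b j * ⟪w i, w j⟫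
          - 2 * ∑ i, ∑ j, b i * (J * A) i j * ⟪w i, w j⟫ := by
      have hswap : ∑ i, ∑ j, (b j * (J * A) j i) * ⟪w i, w j⟫
          = ∑ i, ∑ j, b i * (J * A) i j * ⟪w i, w j⟫ := by
        rw [Finset.sum_comm]
        refine Finset.sum_congr rfl fun i _ => Finset.sum_congr rfl fun j _ => ?_
        rw [real_inner_comm]
      simp only [hRe, sub_mul, Finset.sum_sub_distrib]
      rw [hswap]; ring
    rw [h1, h2, h3]; ring
  nlinarith [norm_nonneg u₀, norm_nonneg mt, key,
    mul_nonneg (sq_nonneg τ) hS]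
end

section
/- Let s ≥ 1, A = (a_{ij}) an s×s real matrix with c = A𝟙, D = (d_{ij}) an s×s real matrix with D𝟙 = 𝟙 (𝟙 the all-ones vector), b ∈ ℝ^s, B = diag(b), and J the s×s shift matrix (J_{ij}=1 if i=j+1, else 0). Assume the order conditions bᵀ𝟙 = 1, bᵀJc = 1/2 and bᵀDc = 1/2. If the symmetric matrix Q = BDA + (BDA)ᵀ − bbᵀ is positive semi-definite, then Q𝟙 = 0; and if the symmetric matrix R = bbᵀ − BJA − (BJA)ᵀ is positive semi-definite, then R𝟙 = 0. -/
open Matrix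

/-- Under the first- and second-order conditions, positive semi-definiteness of
`Q = BDA + (BDA)ᵀ − bbᵀ` forces `Q𝟙 = 0`, and positive semi-definiteness of
`R = bbᵀ − BJA − (BJA)ᵀ` forces `R𝟙 = 0`. -/
theorem stmt5 (s : ℕ) (hs : 1 ≤ s)
    (A D : Matrix (Fin s) (Fin s) ℝ) (b : Fin s → ℝ)
    (c : Fin s → ℝ) (hc : c = A *ᵥ fun _ => 1)
    (hD : (D *ᵥ fun _ => 1) = fun _ => 1)
    (J : Matrix (Fin s) (Fin s) ℝ)
    (hJ : J = Matrix.of fun i j : Fin s => if (i : ℕ) = (j : ℕ) + 1 then 1 else 0)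
    (ord1 : ∑ i, b i = 1)
    (ord2J : b ⬝ᵥ (J *ᵥ c) = 1 / 2)
    (ord2D : b ⬝ᵥ (D *ᵥ c) = 1 / 2) :
    ((Matrix.diagonal b * D * A + (Matrix.diagonal b * D * A)ᵀ
        - Matrix.vecMulVec b b).PosSemidef →
      ((Matrix.diagonal b * D * A + (Matrix.diagonal b * D * A)ᵀ
        - Matrix.vecMulVec b b) *ᵥ fun _ => 1) = 0) ∧
    ((Matrix.vecMulVec b b - Matrix.diagonal b * J * A
        - (Matrix.diagonal b * J * A)ᵀ).PosSemidef →
      ((Matrix.vecMulVec b b - Matrix.diagonal b * J * A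
        - (Matrix.diagonal b * J * A)ᵀ) *ᵥ fun _ => 1) = 0) := by
  set one : Fin s → ℝ := fun _ => 1 with hone
  have hT : ∀ M : Matrix (Fin s) (Fin s) ℝ,
      one ⬝ᵥ (Mᵀ *ᵥ one) = one ⬝ᵥ (M *ᵥ one) := fun M => by
    rw [dotProduct_mulVec, vecMul_transpose, dotProduct_comm]
  have hDiag : ∀ v : Fin s → ℝ,
      one ⬝ᵥ (Matrix.diagonal b *ᵥ v) = b ⬝ᵥ v := fun v => by
    simp [hone, dotProduct, mulVec_diagonal]
  have hbb : one ⬝ᵥ (Matrix.vecMulVec b b *ᵥ one) = 1 := by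
    simp only [hone, dotProduct, mulVec, vecMulVec_apply]
    rw [show ∑ x : Fin s, (fun _ => (1:ℝ)) x * ∑ j, b x * b j * (fun _ => (1:ℝ)) j
        = (∑ i, b i) * (∑ i, b i) by
      simp [Finset.mul_sum, Finset.sum_mul, mul_comm], ord1]
    norm_num
  have hBMA : ∀ M : Matrix (Fin s) (Fin s) ℝ,
      one ⬝ᵥ ((Matrix.diagonal b * M * A) *ᵥ one) = b ⬝ᵥ (M *ᵥ c) := fun M => by
    rw [← Matrix.mulVec_mulVec, ← Matrix.mulVec_mulVec, hDiag, ← hc]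
  constructor
  · intro hQ
    rw [← hQ.dotProduct_mulVec_zero_iff one]
    have : star one = one := by funext i; simp [hone]
    rw [this]
    simp only [Matrix.add_mulVec, Matrix.sub_mulVec, dotProduct_add, dotProduct_sub,
      hT, hBMA, hbb, ord2D]
    norm_num
  · intro hR
    rw [← hR.dotProduct_mulVec_zero_iff one]
    have : star one = one := by funext i; simp [hone]
    rw [this]
    simp only [Matrix.sub_mulVec, dotProduct_sub, hT, hBMA, hbb, ord2J]
    norm_num
end

section
/- Let A = (a_{ij}) be a 2×2 real lower-triangular matrix, c = A𝟙, b ∈ ℝ² with b₁, b₂ ≥ 0, B = diag(b), and J the 2×2 shift matrix (J₂₁ = 1, all other entries 0). Assume the order conditions bᵀ𝟙 = 1 and bᵀJc = 1/2, and assume the symmetric matrix R = bbᵀ − BJA − (BJA)ᵀ is positive semi-definite. Then b₁ = b₂ = 1/2 and a₁₁ = 1. -/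
open Matrix
open scoped ComplexOrder

/-!
Summing the entries of `R = bbᵀ − BJA − (BJA)ᵀ` gives `𝟙ᵀR𝟙 = (bᵀ𝟙)² − 2 bᵀJA𝟙`, which the two
order conditions make `1 − 2 · 1/2 = 0`. A positive semi-definite matrix whose quadratic form
vanishes at `𝟙` annihilates `𝟙`. For two stages the first entry of `R𝟙` is
`b₁(b₁ + b₂) − b₂a₁₁`, and `b₂a₁₁ = bᵀJc = 1/2` because `A` is lower triangular, so `b₁ = 1/2`.
-/

namespace Matrix

variable {n α : Type*} [Fintype n] [DecidableEq n]

def lengthIncrease [CommRing α] (b : n → α) (J A : Matrix n n α) : Matrix n n α :=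
  vecMulVec b b - diagonal b * J * A - (diagonal b * J * A)ᵀ

theorem one_dotProduct_lengthIncrease_mulVec_one [CommRing α] (b : n → α) (J A : Matrix n n α) :
    1 ⬝ᵥ lengthIncrease b J A *ᵥ 1 = (∑ i, b i) ^ 2 - 2 * b ⬝ᵥ (J *ᵥ (A *ᵥ 1)) := by
  have hbb : (1 : n → α) ⬝ᵥ vecMulVec b b *ᵥ 1 = (∑ i, b i) ^ 2 := by
    rw [dotProduct_mulVec, vecMul_vecMulVec, smul_dotProduct, one_dotProduct, dotProduct_one,
      smul_eq_mul, sq]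
  have hM : (1 : n → α) ⬝ᵥ (diagonal b * J * A) *ᵥ 1 = b ⬝ᵥ (J *ᵥ (A *ᵥ 1)) := by
    simp only [← mulVec_mulVec, dotProduct, mulVec_diagonal, Pi.one_apply, one_mul]
  have hMt : (1 : n → α) ⬝ᵥ (diagonal b * J * A)ᵀ *ᵥ 1 = b ⬝ᵥ (J *ᵥ (A *ᵥ 1)) := by
    rw [mulVec_transpose, dotProduct_comm, ← dotProduct_mulVec, hM]
  rw [lengthIncrease, sub_mulVec, sub_mulVec, dotProduct_sub, dotProduct_sub, hbb, hM, hMt]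
  ring

theorem lengthIncrease_mulVec_one_eq_zero {𝕜 : Type*} [RCLike 𝕜] {b : n → 𝕜}
    {J A : Matrix n n 𝕜} (hR : (lengthIncrease b J A).PosSemidef) (hb : ∑ i, b i = 1)
    (hbJc : b ⬝ᵥ (J *ᵥ (A *ᵥ 1)) = 1 / 2) : lengthIncrease b J A *ᵥ 1 = 0 := by
  rw [← hR.dotProduct_mulVec_zero_iff, star_one, one_dotProduct_lengthIncrease_mulVec_one, hb,
    hbJc]
  norm_num

theorem lengthIncrease_shift_mulVec_one_apply_zero [CommRing α] (b : Fin 2 → α)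
    (A : Matrix (Fin 2) (Fin 2) α) :
    (lengthIncrease b !![0, 0; 1, 0] A *ᵥ 1) 0 = b 0 * (b 0 + b 1) - b 1 * A 0 0 := by
  simp only [lengthIncrease, mulVec, dotProduct, Fin.sum_univ_two, sub_apply, vecMulVec_apply,
    transpose_apply, mul_apply, diagonal_apply_eq, diagonal_apply_ne, ne_eq, zero_ne_one,
    one_ne_zero, not_false_eq_true, of_apply, cons_val', cons_val_zero, cons_val_one,
    cons_val_fin_one, Pi.one_apply]
  ring

end Matrix

theorem stmt6_general (A : Matrix (Fin 2) (Fin 2) ℝ) (hA : A 0 1 = 0)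
    (b : Fin 2 → ℝ)
    (c : Fin 2 → ℝ) (hc : c = A *ᵥ fun _ => 1)
    (J : Matrix (Fin 2) (Fin 2) ℝ) (hJ : J = !![0, 0; 1, 0])
    (ord1 : ∑ i, b i = 1)
    (ord2 : b ⬝ᵥ (J *ᵥ c) = 1 / 2)
    (hR : (Matrix.vecMulVec b b - Matrix.diagonal b * J * A
            - (Matrix.diagonal b * J * A)ᵀ).PosSemidef) :
    b 0 = 1 / 2 ∧ b 1 = 1 / 2 ∧ A 0 0 = 1 := by
  subst hc hJ
  have hrow := congrFun (lengthIncrease_mulVec_one_eq_zero hR ord1 ord2) 0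
  rw [lengthIncrease_shift_mulVec_one_apply_zero, Pi.zero_apply] at hrow
  have hbJc : b 1 * A 0 0 = 1 / 2 := by
    simpa [dotProduct, mulVec, Fin.sum_univ_two, hA] using ord2
  rw [Fin.sum_univ_two] at ord1
  have hb0 : b 0 = 1 / 2 := by linear_combination hrow + hbJc - b 0 * ord1
  have hb1 : b 1 = 1 / 2 := by linear_combination ord1 - hb0
  exact ⟨hb0, hb1, by linear_combination 2 * hbJc - 2 * A 0 0 * hb1⟩

/-- For a two-stage second-order PRK scheme with nonnegative weights whose
length-increase matrix `R = bbᵀ − BJA − (BJA)ᵀ` is positive semi-definite,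
necessarily `b₁ = b₂ = 1/2` and `a₁₁ = 1`. -/
theorem stmt6 (A : Matrix (Fin 2) (Fin 2) ℝ) (hA : A 0 1 = 0)
    (b : Fin 2 → ℝ) (hb0 : 0 ≤ b 0) (hb1 : 0 ≤ b 1)
    (c : Fin 2 → ℝ) (hc : c = A *ᵥ fun _ => 1)
    (J : Matrix (Fin 2) (Fin 2) ℝ) (hJ : J = !![0, 0; 1, 0])
    (ord1 : ∑ i, b i = 1)
    (ord2 : b ⬝ᵥ (J *ᵥ c) = 1 / 2)
    (hR : (Matrix.vecMulVec b b - Matrix.diagonal b * J * A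
            - (Matrix.diagonal b * J * A)ᵀ).PosSemidef) :
    b 0 = 1 / 2 ∧ b 1 = 1 / 2 ∧ A 0 0 = 1 :=
  stmt6_general A hA b c hc J hJ ord1 ord2 hR
end

section
/- There do not exist a 2×2 real lower-triangular matrix A = (a_{ij}) with a₁₁ > 0 and a₂₂ > 0, a 2×2 real lower-triangular matrix D = (d_{ij}) with d₁₁ > 0, d₂₂ > 0 and row sums d₁₁ = 1 and d₂₁ + d₂₂ = 1, and a vector b ∈ ℝ² with b₁, b₂ ≥ 0, such that all of the following hold (with c = A𝟙, B = diag(b), J the 2×2 shift matrix with J₂₁ = 1 and all other entries 0): the order conditions bᵀ𝟙 = 1 and bᵀJc = bᵀDc = 1/2; the stiff accuracy conditions b₁ = a₂₁ and b₂ = a₂₂; and both Q = BDA + (BDA)ᵀ − bbᵀ and R = bbᵀ − BJA − (BJA)ᵀ are positive semi-definite. -/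
open Matrix

set_option maxHeartbeats 1000000 in
/-- There is no two-stage second-order stiffly accurate product-type IMEX
Runge–Kutta scheme with nonnegative weights whose matrices
`Q = BDA + (BDA)ᵀ − bbᵀ` and `R = bbᵀ − BJA − (BJA)ᵀ` are both positive
semi-definite. -/
theorem stmt7 : ¬ ∃ (A D : Matrix (Fin 2) (Fin 2) ℝ) (b : Fin 2 → ℝ),
    A 0 1 = 0 ∧ 0 < A 0 0 ∧ 0 < A 1 1 ∧
    D 0 1 = 0 ∧ 0 < D 0 0 ∧ 0 < D 1 1 ∧ D 0 0 = 1 ∧ D 1 0 + D 1 1 = 1 ∧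
    0 ≤ b 0 ∧ 0 ≤ b 1 ∧
    (∑ i, b i) = 1 ∧
    b ⬝ᵥ ((!![0, 0; 1, 0] : Matrix (Fin 2) (Fin 2) ℝ) *ᵥ (A *ᵥ fun _ => 1)) = 1 / 2 ∧
    b ⬝ᵥ (D *ᵥ (A *ᵥ fun _ => 1)) = 1 / 2 ∧
    b 0 = A 1 0 ∧ b 1 = A 1 1 ∧
    (Matrix.diagonal b * D * A + (Matrix.diagonal b * D * A)ᵀ
      - Matrix.vecMulVec b b).PosSemidef ∧
    (Matrix.vecMulVec b b
      - Matrix.diagonal b * !![0, 0; 1, 0] * A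
      - (Matrix.diagonal b * !![0, 0; 1, 0] * A)ᵀ).PosSemidef := by
  rintro ⟨A, D, b, hA01, hA00, hA11, hD01, hD00, hD11, hD00', hDrow, hb0, hb1,
    hsum, hJ, hD, hb0A, hb1A, hQ, hR⟩
  have hRv := hR.dotProduct_mulVec_nonneg ![b 1 ^ 2, 1/2 - b 0 * b 1]
  simp only [Matrix.sub_apply, Matrix.add_apply, Matrix.mul_apply, Matrix.transpose_apply,
    Matrix.vecMulVec_apply, Matrix.diagonal_apply, Matrix.mulVec, dotProduct,
    Fin.sum_univ_two, Matrix.cons_val_zero, Matrix.cons_val_one, Matrix.head_cons,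
    Matrix.head_fin_const, star_trivial] at hRv hJ hD hsum
  norm_num [Matrix.cons_val_zero, Matrix.cons_val_one, Matrix.head_cons] at hRv hJ hD
  rw [hA01] at hRv hJ hD
  rw [hD01, hD00'] at hD
  have hb1' : 0 < b 1 := hb1A ▸ hA11
  have hm : b 1 * A 0 0 = 1 / 2 := by linarith
  have e : (0:ℝ) ≤ b 1 ^ 2 * ((b 0 * b 1) ^ 2 - (1 / 2 - b 0 * b 1) ^ 2) := by
    calc (0:ℝ) ≤ _ := hRv
      _ = b 1 ^ 2 * ((b 0 * b 1) ^ 2 - (1 / 2 - b 0 * b 1) ^ 2) := by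
          linear_combination (-(1 - 2 * b 0 * b 1) * b 1 ^ 2) * hm
  have key : b 0 * b 1 ≥ 1/4 := by
    nlinarith [e, mul_pos hb1' hb1']
  have h0 : b 0 = 1/2 := by nlinarith [sq_nonneg (b 0 - b 1)]
  have h1 : b 1 = 1/2 := by linarith
  have hA : A 0 0 = 1 := by rw [h1] at hJ; linarith
  have hc : A 1 0 + A 1 1 = 1 := by linarith [hb0A, hb1A]
  rw [hA, hc, h0, h1] at hD
  linarith [hD, hDrow]
end

section
/- There do not exist a 3×3 real lower-triangular matrix A = (a_{ij}) with positive diagonal entries, a 3×3 real lower-triangular matrix D = (d_{ij}) with positive diagonal entries and all row sums equal to 1, and a vector b ∈ ℝ³ with b_i ≥ 0 for all i, such that all of the following hold (with c = A𝟙, B = diag(b), J the 3×3 shift matrix with J_{ij}=1 if i=j+1 and 0 otherwise, and ∘ the entrywise product of vectors): the first-order condition bᵀ𝟙 = 1; the second-order conditions bᵀJc = bᵀDc = 1/2; the third-order conditions bᵀJAJc = bᵀJADc = bᵀDAJc = bᵀDADc = 1/6 and bᵀ((Jc)∘(Jc)) = bᵀ((Jc)∘(Dc)) = bᵀ((Dc)∘(Dc))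 = 1/3; and both Q = BDA + (BDA)ᵀ − bbᵀ and R = bbᵀ − BJA − (BJA)ᵀ are positive semi-definite. -/
set_option maxHeartbeats 2000000


open Matrix

/-- There is no three-stage third-order product-type IMEX Runge–Kutta scheme
with nonnegative weights whose matrices `Q = BDA + (BDA)ᵀ − bbᵀ` and
`R = bbᵀ − BJA − (BJA)ᵀ` are both positive semi-definite. -/
theorem stmt8 : ¬ ∃ (A D : Matrix (Fin 3) (Fin 3) ℝ) (b : Fin 3 → ℝ),
    (∀ i j : Fin 3, i < j → A i j = 0) ∧ (∀ i : Fin 3, 0 < A i i) ∧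
    (∀ i j : Fin 3, i < j → D i j = 0) ∧ (∀ i : Fin 3, 0 < D i i) ∧
    (∀ i : Fin 3, ∑ j, D i j = 1) ∧
    (∀ i : Fin 3, 0 ≤ b i) ∧
    (let J : Matrix (Fin 3) (Fin 3) ℝ :=
        Matrix.of fun i j : Fin 3 => if (i : ℕ) = (j : ℕ) + 1 then 1 else 0
     let c : Fin 3 → ℝ := A *ᵥ fun _ => 1
     (∑ i, b i) = 1 ∧
     b ⬝ᵥ (J *ᵥ c) = 1 / 2 ∧ b ⬝ᵥ (D *ᵥ c) = 1 / 2 ∧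
     b ⬝ᵥ (J *ᵥ (A *ᵥ (J *ᵥ c))) = 1 / 6 ∧
     b ⬝ᵥ (J *ᵥ (A *ᵥ (D *ᵥ c))) = 1 / 6 ∧
     b ⬝ᵥ (D *ᵥ (A *ᵥ (J *ᵥ c))) = 1 / 6 ∧
     b ⬝ᵥ (D *ᵥ (A *ᵥ (D *ᵥ c))) = 1 / 6 ∧
     b ⬝ᵥ ((J *ᵥ c) * (J *ᵥ c)) = 1 / 3 ∧
     b ⬝ᵥ ((J *ᵥ c) * (D *ᵥ c)) = 1 / 3 ∧
     b ⬝ᵥ ((D *ᵥ c) * (D *ᵥ c)) = 1 / 3 ∧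
     (Matrix.diagonal b * D * A + (Matrix.diagonal b * D * A)ᵀ
        - Matrix.vecMulVec b b).PosSemidef ∧
     (Matrix.vecMulVec b b - Matrix.diagonal b * J * A
        - (Matrix.diagonal b * J * A)ᵀ).PosSemidef) := by
  rintro ⟨A, D, b, hAlt, hApos, hDlt, hDpos, hDrow, hbnn, h⟩
  obtain ⟨h1, h2, h3, h4, h5, h6, h7, h8, h9, h10, hQ, hR⟩ := h
  have hA01 : A 0 1 = 0 := hAlt 0 1 (by decide)
  have hA02 : A 0 2 = 0 := hAlt 0 2 (by decide)
  have hA12 : A 1 2 = 0 := hAlt 1 2 (by decide)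
  have hD01 : D 0 1 = 0 := hDlt 0 1 (by decide)
  have hD02 : D 0 2 = 0 := hDlt 0 2 (by decide)
  have hD12 : D 1 2 = 0 := hDlt 1 2 (by decide)
  have hD00 : D 0 0 = 1 := by
    have := hDrow 0
    rw [Fin.sum_univ_three] at this
    linarith
  simp only [Matrix.mulVec, dotProduct, Fin.sum_univ_three, Matrix.of_apply,
    Pi.mul_apply] at h1 h2 h3 h8 h9 h10
  norm_num [hA01, hA02, hA12, hD01, hD02, hD12, hD00] at h2 h3 h8 h9 h10
  -- Step 1: b 0 = 0
  have key : b 0 * (A 0 0) ^ 2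
      + b 1 * (A 0 0 - (D 1 0 * A 0 0 + D 1 1 * (A 1 0 + A 1 1))) ^ 2
      + b 2 * ((A 1 0 + A 1 1) - (D 2 0 * A 0 0 + D 2 1 * (A 1 0 + A 1 1)
          + D 2 2 * (A 2 0 + A 2 1 + A 2 2))) ^ 2 = 0 := by
    linear_combination h8 - 2 * h9 + h10
  have hb0 : b 0 = 0 := by
    have hle : b 0 ≤ 0 := by
      nlinarith [mul_nonneg (hbnn 1)
          (sq_nonneg (A 0 0 - (D 1 0 * A 0 0 + D 1 1 * (A 1 0 + A 1 1)))),
        mul_nonneg (hbnn 2)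
          (sq_nonneg ((A 1 0 + A 1 1) - (D 2 0 * A 0 0 + D 2 1 * (A 1 0 + A 1 1)
            + D 2 2 * (A 2 0 + A 2 1 + A 2 2)))),
        mul_pos (hApos 0) (hApos 0), key]
    linarith [hbnn 0]
  -- Step 2: b 1 = 0 from PSD of R
  have hb1 : b 1 = 0 := by
    have key : ∀ t : ℝ, 0 ≤ b 1 ^ 2 - 2 * t * (b 1 * A 0 0) := by
      intro t
      have := hR.dotProduct_mulVec_nonneg ![t, 1, 0]
      simp only [Matrix.mulVec, dotProduct, Fin.sum_univ_three, Matrix.sub_apply,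
        Matrix.transpose_apply, Matrix.mul_apply, Matrix.vecMulVec_apply,
        Matrix.diagonal_apply, Matrix.of_apply, star_trivial,
        Matrix.cons_val_zero, Matrix.cons_val_one, Matrix.head_cons,
        Matrix.cons_val_two, Matrix.tail_cons] at this
      norm_num [hb0, hA01, hA02, hA12, Fin.val_one, Fin.val_two] at this
      split_ifs at this with hif
      · exact absurd hif (by decide)
      · nlinarith [this]
    by_contra hne
    have hb1pos : 0 < b 1 := lt_of_le_of_ne (hbnn 1) (Ne.symm hne)
    have hs : (0:ℝ) < b 1 * A 0 0 := mul_pos hb1pos (hApos 0)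
    have ht := key ((b 1 ^ 2 + 1) / (2 * (b 1 * A 0 0)))
    have he : 2 * ((b 1 ^ 2 + 1) / (2 * (b 1 * A 0 0))) * (b 1 * A 0 0)
        = b 1 ^ 2 + 1 := by
      have hA0 := (hApos 0).ne'
      field_simp
    rw [he] at ht
    linarith
  -- Step 3: contradiction
  have hb2 : b 2 = 1 := by
    have := h1; rw [hb0, hb1] at this; linarith
  rw [hb1, hb2] at h2 h8
  norm_num at h2 h8
  nlinarith [h2, h8]
end

section
/- Let A be the 2×2 real matrix with rows (1, 0) and (0, 1/2), D the 2×2 real matrix with rows (1, 0) and (−1, 2), and b = (1/2, 1/2) ∈ ℝ². Let c = A𝟙 = (1, 1/2), B = diag(b), and J the 2×2 shift matrix (J₂₁ = 1, all other entries 0). Then: (i) b₁, b₂ ≥ 0; (ii) the order conditions hold: bᵀ𝟙 = 1 and bᵀJc = bᵀDc = 1/2; (iii) the matrix Q = BDA + (BDA)ᵀ − bbᵀ equals [[3/4, −3/4], [−3/4, 3/4]] and is positive semi-definite; and (iv) the matrix R = bbᵀ − BJA − (BJA)ᵀ equals [[1/4, −1/4], [−1/4, 1/4]] and is positive semi-definite.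 -/
open Matrix

lemma psd_aux (a e : ℝ) (he : e = -a) (ha : 0 ≤ a) : (!![a, e; e, a]).PosSemidef := by
  subst he
  refine Matrix.PosSemidef.of_dotProduct_mulVec_nonneg ?_ ?_
  · ext i j
    fin_cases i <;> fin_cases j <;>
      simp [Matrix.conjTranspose, Matrix.transpose_apply, Matrix.vecHead, Matrix.vecTail]
  · intro x
    have : star x ⬝ᵥ (!![a, -a; -a, a]) *ᵥ x = a * (x 0 - x 1)^2 := by
      simp [dotProduct, Matrix.mulVec, Fin.sum_univ_two, Matrix.vecHead, Matrix.vecTail]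
      ring
    rw [this]
    positivity

/-- Verification of the second-order PRK tableau: with
`A = [[1,0],[0,1/2]]`, `D = [[1,0],[−1,2]]`, `b = (1/2,1/2)`, `c = A𝟙 = (1,1/2)`,
the weights are nonnegative, the first- and second-order conditions hold, and
`Q = BDA + (BDA)ᵀ − bbᵀ = [[3/4,−3/4],[−3/4,3/4]]` and
`R = bbᵀ − BJA − (BJA)ᵀ = [[1/4,−1/4],[−1/4,1/4]]` are positive semi-definite. -/
theorem stmt9 (A D J : Matrix (Fin 2) (Fin 2) ℝ) (b c : Fin 2 → ℝ)
    (hA : A = !![1, 0; 0, 1/2]) (hD : D = !![1, 0; -1, 2])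
    (hb : b = ![1/2, 1/2]) (hJ : J = !![0, 0; 1, 0])
    (hc : c = A *ᵥ fun _ => 1) :
    (0 ≤ b 0 ∧ 0 ≤ b 1) ∧
    c = ![1, 1/2] ∧
    ((∑ i, b i) = 1 ∧ b ⬝ᵥ (J *ᵥ c) = 1 / 2 ∧ b ⬝ᵥ (D *ᵥ c) = 1 / 2) ∧
    (Matrix.diagonal b * D * A + (Matrix.diagonal b * D * A)ᵀ
        - Matrix.vecMulVec b b = !![3/4, -3/4; -3/4, 3/4] ∧
      (Matrix.diagonal b * D * A + (Matrix.diagonal b * D * A)ᵀ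
        - Matrix.vecMulVec b b).PosSemidef) ∧
    (Matrix.vecMulVec b b - Matrix.diagonal b * J * A
        - (Matrix.diagonal b * J * A)ᵀ = !![1/4, -1/4; -1/4, 1/4] ∧
      (Matrix.vecMulVec b b - Matrix.diagonal b * J * A
        - (Matrix.diagonal b * J * A)ᵀ).PosSemidef) := by
  subst hA hD hb hJ hc
  have hceq : (!![(1:ℝ), 0; 0, 1/2] *ᵥ fun _ => 1) = ![1, 1/2] := by
    funext i; fin_cases i <;> simp [Matrix.mulVec, dotProduct, Fin.sum_univ_two, Matrix.vecHead, Matrix.vecTail]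
  have hQ : Matrix.diagonal ![(1:ℝ)/2, 1/2] * !![1, 0; -1, 2] * !![1, 0; 0, 1/2]
      + (Matrix.diagonal ![(1:ℝ)/2, 1/2] * !![1, 0; -1, 2] * !![1, 0; 0, 1/2])ᵀ
      - Matrix.vecMulVec ![(1:ℝ)/2, 1/2] ![1/2, 1/2] = !![3/4, -3/4; -3/4, 3/4] := by
    ext i j
    fin_cases i <;> fin_cases j <;>
      simp [Matrix.mul_apply, Matrix.vecMulVec, Fin.sum_univ_two, Matrix.diagonal, Matrix.transpose_apply, Matrix.vecHead, Matrix.vecTail] <;> norm_num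
  have hR : Matrix.vecMulVec ![(1:ℝ)/2, 1/2] ![1/2, 1/2]
      - Matrix.diagonal ![(1:ℝ)/2, 1/2] * !![0, 0; 1, 0] * !![1, 0; 0, 1/2]
      - (Matrix.diagonal ![(1:ℝ)/2, 1/2] * !![0, 0; 1, 0] * !![1, 0; 0, 1/2])ᵀ
      = !![1/4, -1/4; -1/4, 1/4] := by
    ext i j
    fin_cases i <;> fin_cases j <;>
      simp [Matrix.mul_apply, Matrix.vecMulVec, Fin.sum_univ_two, Matrix.diagonal, Matrix.transpose_apply, Matrix.vecHead, Matrix.vecTail] <;> norm_num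
  refine ⟨⟨by norm_num, by norm_num⟩, hceq, ⟨?_, ?_, ?_⟩, ⟨hQ, ?_⟩, ⟨hR, ?_⟩⟩
  · simp [Fin.sum_univ_two]; norm_num
  · rw [hceq]; simp [dotProduct, Matrix.mulVec, Fin.sum_univ_two, Matrix.vecHead, Matrix.vecTail]
  · rw [hceq]; simp [dotProduct, Matrix.mulVec, Fin.sum_univ_two, Matrix.vecHead, Matrix.vecTail]
  · rw [hQ]; exact psd_aux (3/4) (-3/4) (by norm_num) (by norm_num)
  · rw [hR]; exact psd_aux (1/4) (-1/4) (by norm_num) (by norm_num)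
end

section
/- Let E be a real normed vector space, F a real inner product space, m : E → F, and x ∈ E. Suppose m is (Fréchet) differentiable at x and ‖m(x)‖ ≥ 1. Then the map g : E → F defined by g(y) = m(y)/‖m(y)‖ is differentiable at x, and the operator norm of its derivative satisfies ‖Dg(x)‖ ≤ ‖Dm(x)‖. -/
/-!
The normalization `N v = ‖v‖⁻¹ • v` has derivative `‖p‖⁻¹ • P` at `p ≠ 0`, where `P` is the
orthogonal projection onto `(ℝ ∙ p)ᗮ`. By the chain rule the derivative of `N ∘ m` at `x` is
`‖m x‖⁻¹ • P ∘ Dm(x)`, and since `‖P‖ ≤ 1` and `‖m x‖ ≥ 1` its norm is at most `‖Dm(x)‖`.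
-/

section
variable {E F : Type*} [NormedAddCommGroup E] [NormedSpace ℝ E]
  [NormedAddCommGroup F] [InnerProductSpace ℝ F]

theorem hasFDerivAt_norm_of_ne_zero {p : F} (hp : p ≠ 0) :
    HasFDerivAt (fun v : F => ‖v‖) (‖p‖⁻¹ • innerSL ℝ p) p := by
  have hsq : ‖p‖ ^ 2 ≠ 0 := by positivity
  have h := (Real.hasDerivAt_sqrt hsq).comp_hasFDerivAt p (hasStrictFDerivAt_norm_sq p).hasFDerivAt
  simp only [Function.comp_def, Real.sqrt_sq (norm_nonneg _)] at h
  refine h.congr_fderiv ?_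
  ext v
  simp only [one_div, mul_inv_rev, smul_apply, coe_innerSL_apply, nsmul_eq_mul, Nat.cast_ofNat,
    smul_eq_mul]
  field_simp

theorem hasFDerivAt_norm_inv_smul_self {p : F} (hp : p ≠ 0) :
    HasFDerivAt (fun v : F => ‖v‖⁻¹ • v) (‖p‖⁻¹ • (ℝ ∙ p)ᗮ.starProjection) p := by
  have h := ((hasDerivAt_inv (norm_ne_zero_iff.2 hp)).comp_hasFDerivAt p
    (hasFDerivAt_norm_of_ne_zero hp)).smul (hasFDerivAt_id p)
  refine h.congr_fderiv ?_
  ext w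
  simp only [Function.comp_apply, neg_smul, id_eq, add_apply, smul_apply,
    ContinuousLinearMap.id_apply, ContinuousLinearMap.smulRight_apply, neg_apply,
    coe_innerSL_apply, smul_eq_mul, Submodule.starProjection_orthogonal, sub_apply,
    Submodule.starProjection_singleton, Real.ringHom_apply]
  module

theorem HasFDerivAt.norm_inv_smul {f : E → F} {f' : E →L[ℝ] F} {x : E} (hf : HasFDerivAt f f' x)
    (h0 : f x ≠ 0) :
    HasFDerivAt (fun y => ‖f y‖⁻¹ • f y)
      ((‖f x‖⁻¹ • (ℝ ∙ f x)ᗮ.starProjection).comp f') x :=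
  (hasFDerivAt_norm_inv_smul_self h0).comp x hf

theorem norm_fderiv_norm_inv_smul_le {f : E → F} {x : E} (hf : DifferentiableAt ℝ f x)
    (h0 : f x ≠ 0) :
    ‖fderiv ℝ (fun y => ‖f y‖⁻¹ • f y) x‖ ≤ ‖f x‖⁻¹ * ‖fderiv ℝ f x‖ := by
  rw [(hf.hasFDerivAt.norm_inv_smul h0).fderiv]
  calc _ ≤ ‖‖f x‖⁻¹ • (ℝ ∙ f x)ᗮ.starProjection‖ * ‖fderiv ℝ f x‖ :=
        ContinuousLinearMap.opNorm_comp_le _ _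
    _ ≤ ‖f x‖⁻¹ * ‖fderiv ℝ f x‖ := by
        gcongr
        rw [norm_smul, norm_inv, norm_norm]
        exact mul_le_of_le_one_right (by positivity) (Submodule.starProjection_norm_le _)

end

/-- Pointwise projection property: if `m` is differentiable at `x` with `‖m x‖ ≥ 1`,
then the normalized map `y ↦ m y / ‖m y‖` is differentiable at `x` and the operator
norm of its derivative is at most that of the derivative of `m`. -/
theorem stmt15 {E F : Type*} [NormedAddCommGroup E] [NormedSpace ℝ E]
    [NormedAddCommGroup F] [InnerProductSpace ℝ F]
    (m : E → F) (x : E) (hdiff : DifferentiableAt ℝ m x) (hnorm : 1 ≤ ‖m x‖) :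
    DifferentiableAt ℝ (fun y => ‖m y‖⁻¹ • m y) x ∧
      ‖fderiv ℝ (fun y => ‖m y‖⁻¹ • m y) x‖ ≤ ‖fderiv ℝ m x‖ := by
  have h0 : m x ≠ 0 := norm_pos_iff.1 (zero_lt_one.trans_le hnorm)
  refine ⟨(hdiff.hasFDerivAt.norm_inv_smul h0).differentiableAt, ?_⟩
  calc _ ≤ ‖m x‖⁻¹ * ‖fderiv ℝ m x‖ := norm_fderiv_norm_inv_smul_le hdiff h0
    _ ≤ ‖fderiv ℝ m x‖ := mul_le_of_le_one_left (norm_nonneg _) (inv_le_one_of_one_le₀ hnorm)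
end
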